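/- arXiv:2507.03271 — 9 statements merged into one kernel-verified Lean document; each statement's English description precedes it below -/
import Mathlib

section
/- Let X be a type, A : ℕ → Set X a family of sets, and K ≥ 4 a natural number. Then ⋃_{S ⊆ {0,…,K−1}, (|S| : ℝ) > K − √K} ⋂_{k ∈ S} A_k ⊆ ⋂_{S ⊆ {0,…,K−1}, (|S| : ℝ) > K − √K} ⋃_{k ∈ S} A_k, i.e. the LILI with K trees is contained in the LSLI with K trees. -/
/-- For `K ≥ 4`, the LILI with `K` trees is contained in the LSLI with `K` trees. -/
theorem lili_subset_lsli {X : Type*} (A : ℕ → Set X) (K : ℕ) (hK : 4 ≤ K) :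
    (⋃ S ∈ {S : Finset ℕ | S ⊆ Finset.range K ∧ (S.card : ℝ) > (K : ℝ) - Real.sqrt K},
        ⋂ k ∈ S, A k) ⊆
      ⋂ S ∈ {S : Finset ℕ | S ⊆ Finset.range K ∧ (S.card : ℝ) > (K : ℝ) - Real.sqrt K},
        ⋃ k ∈ S, A k := by
  intro x hx
  simp only [Set.mem_iUnion, Set.mem_iInter, Set.mem_setOf_eq] at hx ⊢
  obtain ⟨S, ⟨hS, hScard⟩, hxS⟩ := hx
  intro T hT
  obtain ⟨hT, hTcard⟩ := hT
  -- S and T intersect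
  have hK4 : (4 : ℝ) ≤ (K : ℝ) := by exact_mod_cast hK
  have hsqrt : Real.sqrt K ≤ (K : ℝ) / 2 := by
    rw [show (K : ℝ) / 2 = Real.sqrt (((K : ℝ) / 2) ^ 2) by
      rw [Real.sqrt_sq (by linarith)]]
    apply Real.sqrt_le_sqrt
    nlinarith
  have hunion : ((S ∪ T).card : ℝ) ≤ K := by
    have := Finset.card_le_card (Finset.union_subset hS hT)
    have hr : (Finset.range K).card = K := Finset.card_range K
    exact_mod_cast hr ▸ this
  have hinter : 0 < ((S ∩ T).card : ℝ) := by
    have h := Finset.card_union_add_card_inter S T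
    have h' : ((S ∪ T).card : ℝ) + ((S ∩ T).card : ℝ)
        = (S.card : ℝ) + (T.card : ℝ) := by exact_mod_cast h
    linarith
  have : (S ∩ T).Nonempty := Finset.card_pos.mp (by exact_mod_cast hinter)
  obtain ⟨k, hk⟩ := this
  exact ⟨k, Finset.mem_of_mem_inter_right hk, hxS k (Finset.mem_of_mem_inter_left hk)⟩
end

section
/- Let (Ω, 𝓕, μ) be a probability space and let (A_k)_{k ∈ ℕ} be a sequence of measurable events that are mutually independent with μ(A_k) = ENNReal.ofReal p for every k, where p ∈ [0,1] is a fixed real number. For K ∈ ℕ let B_K = ⋃_{S ⊆ {0,…,K−1}, (|S| : ℝ) > K − √K} ⋂_{k ∈ S} A_k. Then: (i) if p < 1, μ(B_K) → 0 as K → ∞; and (ii) if p = 1, μ(B_K) = 1 for every K ≥ 1. In particular, lim_{K→∞} μ(B_K) = 1 if and only if p = 1. -/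
open MeasureTheory ProbabilityTheory Filter

/-- Real-analytic fact: `4(m+1)p^m → 0` for `0 ≤ p < 1`. -/
private lemma lili_aux_real_tendsto {p : ℝ} (hp0 : 0 ≤ p) (hp : p < 1) :
    Tendsto (fun m : ℕ => (4 : ℝ) * ((m : ℝ) + 1) * p ^ m) atTop (nhds 0) := by
  have h1 : Tendsto (fun m : ℕ => ((m : ℝ)) ^ 1 * p ^ m) atTop (nhds 0) :=
    tendsto_pow_const_mul_const_pow_of_abs_lt_one 1 (by rwa [abs_of_nonneg hp0])
  have h2 : Tendsto (fun m : ℕ => p ^ m) atTop (nhds 0) :=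
    tendsto_pow_atTop_nhds_zero_of_lt_one hp0 hp
  have h3 := (h1.const_mul (4 : ℝ)).add (h2.const_mul (4 : ℝ))
  simp only [mul_zero, add_zero] at h3
  exact h3.congr (fun m => by ring)

/-- The block size `K / (Nat.sqrt K + 1)` tends to infinity. -/
private lemma lili_aux_r_tendsto :
    Tendsto (fun K : ℕ => K / (Nat.sqrt K + 1)) atTop atTop := by
  rw [tendsto_atTop_atTop]
  intro b
  refine ⟨(4 * (b + 1)) ^ 2, fun K hK => ?_⟩
  set s := Nat.sqrt K with hs
  have hsb : 4 * (b + 1) ≤ s := by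
    have := Nat.sqrt_le_sqrt hK
    rwa [Nat.sqrt_eq' (4 * (b + 1))] at this
  have hss : s * s ≤ K := Nat.sqrt_le K
  rw [Nat.le_div_iff_mul_le (Nat.succ_pos s)]
  show b * (s + 1) ≤ K
  calc b * (s + 1) ≤ b * (2 * s) := Nat.mul_le_mul_left b (by omega)
    _ = (2 * b) * s := by ring
    _ ≤ s * s := Nat.mul_le_mul_right s (by omega)
    _ ≤ K := hss

/-- Combinatorial core: if `S ⊆ range K` misses fewer than `√K` elements, then `S`
contains one of the `Nat.sqrt K + 1` disjoint blocks of length `K / (Nat.sqrt K + 1)`. -/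
private lemma lili_aux_block {K : ℕ} {S : Finset ℕ} (hS : S ⊆ Finset.range K)
    (hcard : ((K : ℝ) - Real.sqrt K) < (S.card : ℝ)) :
    ∃ i ∈ Finset.range (Nat.sqrt K + 1),
      Finset.Ico (i * (K / (Nat.sqrt K + 1))) (i * (K / (Nat.sqrt K + 1)) + K / (Nat.sqrt K + 1))
        ⊆ S := by
  classical
  by_contra hcon
  push_neg at hcon
  set s := Nat.sqrt K with hs
  set n := s + 1 with hn
  set r := K / n with hr
  have hcon' : ∀ i ∈ Finset.range n, ∃ k ∈ Finset.Ico (i * r) (i * r + r), k ∉ S := by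
    intro i hi
    obtain ⟨k, hk1, hk2⟩ := Finset.not_subset.mp (hcon i hi)
    exact ⟨k, hk1, hk2⟩
  choose! f hf1 hf2 using hcon'
  have hinj : Set.InjOn f (Finset.range n) := by
    intro i hi j hj hij
    have hi' := Finset.mem_Ico.mp (hf1 i hi)
    have hj' := Finset.mem_Ico.mp (hf1 j hj)
    have h1 : f i / r = i :=
      Nat.div_eq_of_lt_le hi'.1 (by rw [Nat.succ_mul]; exact hi'.2)
    have h2 : f j / r = j :=
      Nat.div_eq_of_lt_le hj'.1 (by rw [Nat.succ_mul]; exact hj'.2)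
    rw [← h1, ← h2, hij]
  have hmap : ∀ i ∈ (Finset.range n : Finset ℕ), f i ∈ Finset.range K \ S := by
    intro i hi
    rw [Finset.mem_sdiff, Finset.mem_range]
    refine ⟨?_, hf2 i hi⟩
    have h1 := (Finset.mem_Ico.mp (hf1 i hi)).2
    have h2 : i * r + r ≤ n * r := by
      have hin : i + 1 ≤ n := Finset.mem_range.mp hi
      calc i * r + r = (i + 1) * r := (Nat.succ_mul i r).symm
        _ ≤ n * r := Nat.mul_le_mul_right _ hin
    have h3 : n * r ≤ K := by rw [hr, mul_comm]; exact Nat.div_mul_le_self K n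
    omega
  have hcardle : n ≤ (Finset.range K \ S).card := by
    have := Finset.card_le_card_of_injOn f hmap hinj
    simpa using this
  have hsd : (Finset.range K \ S).card = K - S.card := by
    rw [Finset.card_sdiff_of_subset hS, Finset.card_range]
  have hSK : S.card ≤ K := by simpa using Finset.card_le_card hS
  have hsum : S.card + n ≤ K := by omega
  have hsqrt : Real.sqrt K < (n : ℝ) := by
    rw [Real.sqrt_lt' (by positivity)]
    have hK2 : K < n ^ 2 := Nat.lt_succ_sqrt' K
    exact_mod_cast hK2
  have hcast : (S.card : ℝ) + (n : ℝ) ≤ (K : ℝ) := by exact_mod_cast hsum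
  linarith

open scoped ENNReal in
open MeasureTheory ProbabilityTheory Filter in
/-- Zero-one law for the Limit Inferior Leaf Interval: with `A k` mutually independent
events of common probability `p`, the probability of the LILI event
`B K = ⋃_{S ⊆ range K, |S| > K - √K} ⋂_{k ∈ S} A k` tends to `0` if `p < 1`,
and equals `1` for every `K ≥ 1` if `p = 1`; in particular it tends to `1` iff `p = 1`. -/
theorem lili_zero_one_law {Ω : Type*} [MeasurableSpace Ω] (μ : Measure Ω)
    [IsProbabilityMeasure μ] (A : ℕ → Set Ω) (hA : ∀ k, MeasurableSet (A k))
    (p : ℝ) (hp0 : 0 ≤ p) (hp1 : p ≤ 1)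
    (hindep : iIndepSet A μ) (hprob : ∀ k, μ (A k) = ENNReal.ofReal p) :
    (p < 1 → Tendsto (fun K : ℕ =>
        μ (⋃ S ∈ {S : Finset ℕ | S ⊆ Finset.range K ∧ (S.card : ℝ) > (K : ℝ) - Real.sqrt K},
            ⋂ k ∈ S, A k)) atTop (nhds 0)) ∧
    (p = 1 → ∀ K : ℕ, 1 ≤ K →
        μ (⋃ S ∈ {S : Finset ℕ | S ⊆ Finset.range K ∧ (S.card : ℝ) > (K : ℝ) - Real.sqrt K},
            ⋂ k ∈ S, A k) = 1) ∧
    (Tendsto (fun K : ℕ =>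
        μ (⋃ S ∈ {S : Finset ℕ | S ⊆ Finset.range K ∧ (S.card : ℝ) > (K : ℝ) - Real.sqrt K},
            ⋂ k ∈ S, A k)) atTop (nhds 1) ↔ p = 1) := by
  classical
  have hmeasS : ∀ S : Finset ℕ, μ (⋂ k ∈ S, A k) = ENNReal.ofReal p ^ S.card := by
    intro S
    rw [hindep.meas_biInter S]
    simp [hprob]
  -- Part 1 : p < 1
  have part1 : p < 1 → Tendsto (fun K : ℕ =>
      μ (⋃ S ∈ {S : Finset ℕ | S ⊆ Finset.range K ∧ (S.card : ℝ) > (K : ℝ) - Real.sqrt K},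
          ⋂ k ∈ S, A k)) atTop (nhds 0) := by
    intro hp
    -- measure bound via blocks
    have hbound : ∀ K : ℕ,
        μ (⋃ S ∈ {S : Finset ℕ | S ⊆ Finset.range K ∧ (S.card : ℝ) > (K : ℝ) - Real.sqrt K},
            ⋂ k ∈ S, A k)
          ≤ ENNReal.ofReal (((Nat.sqrt K + 1 : ℕ) : ℝ) * p ^ (K / (Nat.sqrt K + 1))) := by
      intro K
      have hsub :
          (⋃ S ∈ {S : Finset ℕ | S ⊆ Finset.range K ∧
              (S.card : ℝ) > (K : ℝ) - Real.sqrt K}, ⋂ k ∈ S, A k)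
            ⊆ ⋃ i ∈ Finset.range (Nat.sqrt K + 1),
                ⋂ k ∈ Finset.Ico (i * (K / (Nat.sqrt K + 1)))
                    (i * (K / (Nat.sqrt K + 1)) + K / (Nat.sqrt K + 1)), A k := by
        intro ω hω
        rw [Set.mem_iUnion₂] at hω
        obtain ⟨S, hSmem, hωS⟩ := hω
        obtain ⟨hSsub, hScard⟩ := hSmem
        obtain ⟨i, hi, hblock⟩ := lili_aux_block hSsub hScard
        rw [Set.mem_iUnion₂]
        refine ⟨i, hi, ?_⟩
        rw [Set.mem_iInter₂] at hωS ⊢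
        exact fun k hk => hωS k (hblock hk)
      calc μ (⋃ S ∈ {S : Finset ℕ | S ⊆ Finset.range K ∧
              (S.card : ℝ) > (K : ℝ) - Real.sqrt K}, ⋂ k ∈ S, A k)
          ≤ μ (⋃ i ∈ Finset.range (Nat.sqrt K + 1),
              ⋂ k ∈ Finset.Ico (i * (K / (Nat.sqrt K + 1)))
                  (i * (K / (Nat.sqrt K + 1)) + K / (Nat.sqrt K + 1)), A k) :=
            measure_mono hsub
        _ ≤ ∑ i ∈ Finset.range (Nat.sqrt K + 1),
              μ (⋂ k ∈ Finset.Ico (i * (K / (Nat.sqrt K + 1)))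
                  (i * (K / (Nat.sqrt K + 1)) + K / (Nat.sqrt K + 1)), A k) :=
            measure_biUnion_finset_le _ _
        _ = ∑ i ∈ Finset.range (Nat.sqrt K + 1),
              ENNReal.ofReal p ^ (K / (Nat.sqrt K + 1)) := by
            refine Finset.sum_congr rfl fun i _ => ?_
            rw [hmeasS]
            congr 1
            simp [Nat.card_Ico]
        _ = ((Nat.sqrt K + 1 : ℕ) : ℝ≥0∞) * ENNReal.ofReal p ^ (K / (Nat.sqrt K + 1)) := by
            rw [Finset.sum_const, Finset.card_range, nsmul_eq_mul]
        _ = ENNReal.ofReal (((Nat.sqrt K + 1 : ℕ) : ℝ) * p ^ (K / (Nat.sqrt K + 1))) := by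
            rw [ENNReal.ofReal_mul (by positivity), ENNReal.ofReal_natCast,
              ENNReal.ofReal_pow hp0]
    -- the real bound tends to 0
    have hreal : Tendsto
        (fun K : ℕ => ((Nat.sqrt K + 1 : ℕ) : ℝ) * p ^ (K / (Nat.sqrt K + 1)))
        atTop (nhds 0) := by
      have hcomp : Tendsto
          (fun K : ℕ => (4 : ℝ) * (((K / (Nat.sqrt K + 1) : ℕ) : ℝ) + 1)
              * p ^ (K / (Nat.sqrt K + 1))) atTop (nhds 0) :=
        (lili_aux_real_tendsto hp0 hp).comp lili_aux_r_tendsto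
      refine squeeze_zero' (Eventually.of_forall fun K => by positivity) ?_ hcomp
      filter_upwards [eventually_ge_atTop 1] with K hK
      set s := Nat.sqrt K with hs
      set r := K / (s + 1) with hr
      have hss : s * s ≤ K := Nat.sqrt_le K
      have hsK : s ≤ K := Nat.sqrt_le_self K
      have hnn4 : (s + 1) * (s + 1) ≤ 4 * K := by
        have e : (s + 1) * (s + 1) = s * s + 2 * s + 1 := by ring
        omega
      have hKlt : K < (s + 1) * (r + 1) := Nat.lt_mul_div_succ K (Nat.succ_pos s)
      have hn4 : s + 1 ≤ 4 * (r + 1) := by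
        have h1 : (s + 1) * (s + 1) < (4 * (r + 1)) * (s + 1) := by
          calc (s + 1) * (s + 1) ≤ 4 * K := hnn4
            _ < 4 * ((s + 1) * (r + 1)) := by omega
            _ = (4 * (r + 1)) * (s + 1) := by ring
        exact le_of_lt (Nat.lt_of_mul_lt_mul_right h1)
      have hn4' : ((s + 1 : ℕ) : ℝ) ≤ 4 * (((r : ℕ) : ℝ) + 1) := by
        push_cast
        exact_mod_cast hn4
      have hpr : (0 : ℝ) ≤ p ^ r := pow_nonneg hp0 r
      exact mul_le_mul_of_nonneg_right hn4' hpr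
    have hENN : Tendsto
        (fun K : ℕ => ENNReal.ofReal
            (((Nat.sqrt K + 1 : ℕ) : ℝ) * p ^ (K / (Nat.sqrt K + 1))))
        atTop (nhds 0) := by
      have := (ENNReal.continuous_ofReal.tendsto 0).comp hreal
      simpa [Function.comp_def] using this
    exact tendsto_of_tendsto_of_tendsto_of_le_of_le tendsto_const_nhds hENN
      (fun K => zero_le) hbound
  -- Part 2 : p = 1
  have part2 : p = 1 → ∀ K : ℕ, 1 ≤ K →
      μ (⋃ S ∈ {S : Finset ℕ | S ⊆ Finset.range K ∧ (S.card : ℝ) > (K : ℝ) - Real.sqrt K},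
          ⋂ k ∈ S, A k) = 1 := by
    intro hp K hK
    refine le_antisymm prob_le_one ?_
    have hmem : Finset.range K ∈ {S : Finset ℕ | S ⊆ Finset.range K ∧
        (S.card : ℝ) > (K : ℝ) - Real.sqrt K} := by
      refine ⟨subset_rfl, ?_⟩
      rw [Finset.card_range]
      have hpos : 0 < Real.sqrt K := Real.sqrt_pos.mpr (by exact_mod_cast hK)
      linarith
    calc (1 : ℝ≥0∞) = μ (⋂ k ∈ Finset.range K, A k) := by
          rw [hmeasS, hp]; simp
      _ ≤ μ (⋃ S ∈ {S : Finset ℕ | S ⊆ Finset.range K ∧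
            (S.card : ℝ) > (K : ℝ) - Real.sqrt K}, ⋂ k ∈ S, A k) :=
          measure_mono (Set.subset_biUnion_of_mem (u := fun S => ⋂ k ∈ S, A k) hmem)
  refine ⟨part1, part2, ⟨fun htend => ?_, fun hp => ?_⟩⟩
  · by_contra hne
    have hlt : p < 1 := lt_of_le_of_ne hp1 hne
    exact zero_ne_one (tendsto_nhds_unique (part1 hlt) htend)
  · refine Tendsto.congr' ?_ ((tendsto_const_nhds : Tendsto (fun _ : ℕ => (1 : ℝ≥0∞)) atTop (nhds 1)))
    filter_upwards [eventually_ge_atTop 1] with K hK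
    exact (part2 hp K hK).symm
end

section
/- Let (Ω, 𝓕, μ) be a probability space and let (A_k)_{k ∈ ℕ} be a sequence of measurable events that are mutually independent with μ(A_k) = ENNReal.ofReal p for every k, where p ∈ [0,1] is a fixed real number. For K ∈ ℕ let C_K = ⋂_{S ⊆ {0,…,K−1}, (|S| : ℝ) > K − √K} ⋃_{k ∈ S} A_k. Then: (i) if p = 0, μ(C_K) = 0 for every K ≥ 1; and (ii) if p > 0, μ(C_K) → 1 as K → ∞. -/
open MeasureTheory ProbabilityTheory Filter



open scoped Classical in
lemma lsli_mem_iff {Ω : Type*} (A : ℕ → Set Ω) (K : ℕ) (ω : Ω) :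
    (ω ∈ ⋂ S ∈ {S : Finset ℕ | S ⊆ Finset.range K ∧ (S.card : ℝ) > (K : ℝ) - Real.sqrt K},
        ⋃ k ∈ S, A k) ↔
    Real.sqrt K ≤ (((Finset.range K).filter (fun k => ω ∈ A k)).card : ℝ) := by
  set G := (Finset.range K).filter (fun k => ω ∈ A k) with hG
  have hGsub : G ⊆ Finset.range K := Finset.filter_subset _ _
  constructor
  · intro h
    by_contra hlt
    push_neg at hlt
    set B := (Finset.range K).filter (fun k => ω ∉ A k) with hB
    have hcard : G.card + B.card = K := by
      have := Finset.card_filter_add_card_filter_not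
        (s := Finset.range K) (p := fun k => ω ∈ A k)
      simpa [hG, hB] using this
    have hBcard : (B.card : ℝ) > (K : ℝ) - Real.sqrt K := by
      have : (B.card : ℝ) = (K : ℝ) - G.card := by
        have := congrArg (fun n : ℕ => (n : ℝ)) hcard
        push_cast at this
        linarith
      rw [this]; linarith
    have hmem : ω ∈ ⋃ k ∈ B, A k := by
      have := Set.mem_iInter₂.1 h B ⟨Finset.filter_subset _ _, hBcard⟩
      exact this
    rcases Set.mem_iUnion₂.1 hmem with ⟨k, hkB, hk⟩
    exact (Finset.mem_filter.1 hkB).2 hk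
  · intro hsq
    refine Set.mem_iInter₂.2 fun S hS => ?_
    obtain ⟨hSsub, hScard⟩ := hS
    have hKlt : (K : ℝ) < S.card + G.card := by linarith
    have hKlt' : K < S.card + G.card := by exact_mod_cast hKlt
    have hunion : (S ∪ G).card ≤ K := by
      simpa using Finset.card_le_card (Finset.union_subset hSsub hGsub)
    have hint : (S ∩ G).Nonempty := by
      rw [← Finset.card_pos]
      have := Finset.card_union_add_card_inter S G
      omega
    obtain ⟨k, hk⟩ := hint
    rw [Finset.mem_inter] at hk
    exact Set.mem_iUnion₂.2 ⟨k, hk.1, (Finset.mem_filter.1 hk.2).2⟩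


section helpers
variable {Ω : Type*} [MeasurableSpace Ω] {μ : Measure Ω} [IsProbabilityMeasure μ]

lemma indicator_sum_eq_card {Ω : Type*} (A : ℕ → Set Ω) (K : ℕ) (ω : Ω)
    [∀ k, Decidable (ω ∈ A k)] :
    (∑ k ∈ Finset.range K, (A k).indicator (fun _ => (1:ℝ)) ω)
      = (((Finset.range K).filter (fun k => ω ∈ A k)).card : ℝ) := by
  rw [← Finset.sum_boole]
  exact Finset.sum_congr rfl fun k _ => by simp [Set.indicator_apply]

lemma tendsto_ratio (p : ℝ) (hp : 0 < p) :
    Tendsto (fun K : ℕ => (K : ℝ) / ((K : ℝ) * p - Real.sqrt K) ^ 2) atTop (nhds 0) := by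
  have hev : ∀ᶠ K : ℕ in atTop,
      (K : ℝ) / ((K : ℝ) * p - Real.sqrt K) ^ 2 ≤ (4 / p ^ 2) / (K : ℝ) := by
    filter_upwards [eventually_ge_atTop (⌈(4 : ℝ) / p ^ 2⌉₊ + 1)] with K hK
    have hK4 : (4 : ℝ) / p ^ 2 ≤ K := by
      calc (4:ℝ)/p^2 ≤ ⌈(4:ℝ)/p^2⌉₊ := Nat.le_ceil _
        _ ≤ K := by exact_mod_cast Nat.le_of_succ_le hK
    have hK1 : (1 : ℝ) ≤ K := by
      have : (1:ℕ) ≤ K := le_trans (Nat.le_add_left 1 _) hK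
      exact_mod_cast this
    have hsq : Real.sqrt K ≤ (K : ℝ) * p / 2 := by
      have h0 : (4:ℝ) ≤ (K:ℝ) * p ^ 2 := by
        rw [div_le_iff₀ (by positivity)] at hK4; linarith
      have h1 : (K : ℝ) ≤ ((K : ℝ) * p / 2) ^ 2 := by nlinarith [mul_le_mul_of_nonneg_left h0 (le_trans zero_le_one hK1)]
      calc Real.sqrt K ≤ Real.sqrt (((K:ℝ) * p / 2) ^ 2) := Real.sqrt_le_sqrt h1
        _ = (K : ℝ) * p / 2 := Real.sqrt_sq (by positivity)
    have hc : (K : ℝ) * p / 2 ≤ (K : ℝ) * p - Real.sqrt K := by linarith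
    have hcpos : 0 < (K : ℝ) * p / 2 := by positivity
    have h2 : ((K:ℝ) * p / 2) ^ 2 ≤ ((K : ℝ) * p - Real.sqrt K) ^ 2 := by
      apply pow_le_pow_left₀ hcpos.le hc _
    have h3 : (K : ℝ) / ((K : ℝ) * p - Real.sqrt K) ^ 2 ≤ (K : ℝ) / ((K:ℝ) * p / 2) ^ 2 := by
      apply div_le_div_of_nonneg_left (by positivity) (by positivity) h2
    calc (K : ℝ) / ((K : ℝ) * p - Real.sqrt K) ^ 2 ≤ (K : ℝ) / ((K:ℝ) * p / 2) ^ 2 := h3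
      _ = (4 / p ^ 2) / (K : ℝ) := by field_simp; ring
  have hpos : ∀ᶠ K : ℕ in atTop, 0 ≤ (K : ℝ) / ((K : ℝ) * p - Real.sqrt K) ^ 2 := by
    filter_upwards with K; positivity
  exact squeeze_zero' hpos hev (tendsto_const_div_atTop_nhds_zero_nat _)

end helpers


open MeasureTheory ProbabilityTheory Filter in
/-- Zero-one law for the Limit Superior Leaf Interval: with `A k` mutually independent
events of common probability `p`, the probability of the LSLI event
`C K = ⋂_{S ⊆ range K, |S| > K - √K} ⋃_{k ∈ S} A k` is `0` for every `K ≥ 1` if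
`p = 0`, and tends to `1` as `K → ∞` if `p > 0`. -/
theorem lsli_zero_one_law {Ω : Type*} [MeasurableSpace Ω] (μ : Measure Ω)
    [IsProbabilityMeasure μ] (A : ℕ → Set Ω) (hA : ∀ k, MeasurableSet (A k))
    (p : ℝ) (hp0 : 0 ≤ p) (hp1 : p ≤ 1)
    (hindep : iIndepSet A μ) (hprob : ∀ k, μ (A k) = ENNReal.ofReal p) :
    (p = 0 → ∀ K : ℕ, 1 ≤ K →
        μ (⋂ S ∈ {S : Finset ℕ | S ⊆ Finset.range K ∧ (S.card : ℝ) > (K : ℝ) - Real.sqrt K},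
            ⋃ k ∈ S, A k) = 0) ∧
    (0 < p → Tendsto (fun K : ℕ =>
        μ (⋂ S ∈ {S : Finset ℕ | S ⊆ Finset.range K ∧ (S.card : ℝ) > (K : ℝ) - Real.sqrt K},
            ⋃ k ∈ S, A k)) atTop (nhds 1)) := by
  classical
  -- the random variable: number of events among the first K that occur
  set X : ℕ → Ω → ℝ := fun k => (A k).indicator (fun _ => (1:ℝ)) with hX
  set f : ℕ → Ω → ℝ := fun K ω => ∑ k ∈ Finset.range K, X k ω with hf
  -- the LSLI event coincides with {ω | √K ≤ f K ω}
  have hCeq : ∀ K : ℕ,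
      (⋂ S ∈ {S : Finset ℕ | S ⊆ Finset.range K ∧ (S.card : ℝ) > (K : ℝ) - Real.sqrt K},
        ⋃ k ∈ S, A k) = {ω | Real.sqrt K ≤ f K ω} := by
    intro K
    ext ω
    rw [lsli_mem_iff A K ω]
    simp only [Set.mem_setOf_eq, hf, hX, indicator_sum_eq_card A K ω]
  constructor
  · -- p = 0
    intro hp K hK
    rw [hCeq K]
    have hsub : {ω | Real.sqrt K ≤ f K ω} ⊆ ⋃ k, A k := by
      intro ω hω
      have hpos : 0 < Real.sqrt K := Real.sqrt_pos.2 (by exact_mod_cast hK)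
      have : 0 < f K ω := lt_of_lt_of_le hpos hω
      by_contra hnot
      have hzero : ∀ k ∈ Finset.range K, X k ω = 0 := by
        intro k _
        simp only [hX, Set.indicator_apply_eq_zero]
        intro hk
        exact absurd (Set.mem_iUnion.2 ⟨k, hk⟩) hnot
      have : f K ω = 0 := Finset.sum_eq_zero hzero
      linarith
    refine le_antisymm (le_trans (measure_mono hsub) ?_) (zero_le)
    rw [measure_iUnion_null fun k => by rw [hprob k, hp, ENNReal.ofReal_zero]]
  · -- p > 0
    intro hp
    have hXm : ∀ k, Measurable (X k) := fun k => measurable_one.indicator (hA k)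
    have hXL2 : ∀ k, MemLp (X k) 2 μ := fun k =>
      memLp_indicator_const 2 (hA k) 1 (Or.inr (measure_ne_top μ _))
    have hEX : ∀ k, μ[X k] = p := by
      intro k
      rw [hX]
      rw [integral_indicator_const (1:ℝ) (hA k), measureReal_def, hprob k, smul_eq_mul, mul_one,
        ENNReal.toReal_ofReal hp0]
    have hVar : ∀ k, variance (X k) μ ≤ 1 := by
      intro k
      have hsq : (X k) ^ 2 = X k := by
        funext ω
        simp only [hX, Pi.pow_apply, Set.indicator_apply]
        split <;> norm_num
      calc variance (X k) μ ≤ μ[(X k) ^ 2] := variance_le_expectation_sq (hXL2 k).1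
        _ = p := by rw [hsq, hEX k]
        _ ≤ 1 := hp1
    -- measurability of f K
    have hfm : ∀ K, Measurable (f K) := fun K => Finset.measurable_sum _ fun k _ => hXm k
    have hfL2 : ∀ K, MemLp (f K) 2 μ := by
      intro K
      have : MemLp (∑ k ∈ Finset.range K, X k) 2 μ :=
        memLp_finset_sum' _ (fun k _ => hXL2 k)
      convert this using 1
      funext ω; simp [hf]
    have hEf : ∀ K : ℕ, μ[f K] = K * p := by
      intro K
      have : μ[f K] = ∑ k ∈ Finset.range K, μ[X k] := by
        rw [hf]
        exact integral_finset_sum _ fun k _ => (hXL2 k).integrable one_le_two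
      rw [this]
      simp [hEX, Finset.sum_const]
    have hVarf : ∀ K : ℕ, variance (f K) μ ≤ K := by
      intro K
      have hfix : f K = ∑ k ∈ Finset.range K, X k := by funext ω; simp [hf]
      rw [hfix, IndepFun.variance_sum (fun k _ => hXL2 k)
        (fun i _ j _ hij => (hindep.iIndepFun_indicator.indepFun hij))]
      calc ∑ k ∈ Finset.range K, variance (X k) μ ≤ ∑ k ∈ Finset.range K, (1:ℝ) :=
            Finset.sum_le_sum fun k _ => hVar k
        _ = K := by simp
    -- Chebyshev bound, eventually in K
    have hbound : ∀ᶠ K : ℕ in atTop,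
        μ {ω | Real.sqrt K ≤ f K ω}ᶜ ≤
          ENNReal.ofReal ((K : ℝ) / ((K : ℝ) * p - Real.sqrt K) ^ 2) := by
      filter_upwards [eventually_ge_atTop (⌈(4 : ℝ) / p ^ 2⌉₊ + 1)] with K hK
      have hK4 : (4 : ℝ) / p ^ 2 ≤ K := by
        calc (4:ℝ)/p^2 ≤ ⌈(4:ℝ)/p^2⌉₊ := Nat.le_ceil _
          _ ≤ K := by exact_mod_cast Nat.le_of_succ_le hK
      have hK1 : (1 : ℝ) ≤ K := by
        have : (1:ℕ) ≤ K := le_trans (Nat.le_add_left 1 _) hK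
        exact_mod_cast this
      have hsqK : Real.sqrt K ≤ (K : ℝ) * p / 2 := by
        have h0 : (4:ℝ) ≤ (K:ℝ) * p ^ 2 := by
          rw [div_le_iff₀ (by positivity)] at hK4; linarith
        have h1 : (K : ℝ) ≤ ((K : ℝ) * p / 2) ^ 2 := by
          nlinarith [mul_le_mul_of_nonneg_left h0 (le_trans zero_le_one hK1)]
        calc Real.sqrt K ≤ Real.sqrt (((K:ℝ) * p / 2) ^ 2) := Real.sqrt_le_sqrt h1
          _ = (K : ℝ) * p / 2 := Real.sqrt_sq (by positivity)
      have hcpos : 0 < (K : ℝ) * p - Real.sqrt K := by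
        have : 0 < (K:ℝ) * p / 2 := by positivity
        linarith
      have hsub : {ω | Real.sqrt K ≤ f K ω}ᶜ ⊆
          {ω | (K : ℝ) * p - Real.sqrt K ≤ |f K ω - μ[f K]|} := by
        intro ω hω
        simp only [Set.mem_compl_iff, Set.mem_setOf_eq, not_le] at hω
        simp only [Set.mem_setOf_eq, hEf K]
        calc (K : ℝ) * p - Real.sqrt K ≤ (K : ℝ) * p - f K ω := by linarith
          _ ≤ |(K : ℝ) * p - f K ω| := le_abs_self _
          _ = |f K ω - (K : ℝ) * p| := abs_sub_comm _ _
      calc μ {ω | Real.sqrt K ≤ f K ω}ᶜ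
          ≤ μ {ω | (K : ℝ) * p - Real.sqrt K ≤ |f K ω - μ[f K]|} := measure_mono hsub
        _ ≤ ENNReal.ofReal (variance (f K) μ / ((K : ℝ) * p - Real.sqrt K) ^ 2) :=
            meas_ge_le_variance_div_sq (hfL2 K) hcpos
        _ ≤ ENNReal.ofReal ((K : ℝ) / ((K : ℝ) * p - Real.sqrt K) ^ 2) := by
            apply ENNReal.ofReal_le_ofReal
            apply div_le_div_of_nonneg_right (hVarf K) (by positivity) |>.trans_eq rfl
      -- done
    have hcompl0 : Tendsto (fun K : ℕ => μ {ω | Real.sqrt K ≤ f K ω}ᶜ) atTop (nhds 0) := by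
      refine tendsto_of_tendsto_of_tendsto_of_le_of_le' tendsto_const_nhds ?_
        (Eventually.of_forall fun K => zero_le) hbound
      have := ENNReal.tendsto_ofReal (tendsto_ratio p hp)
      simpa using this
    have hmeas : ∀ K : ℕ, MeasurableSet {ω | Real.sqrt K ≤ f K ω} := fun K =>
      measurableSet_le measurable_const (hfm K)
    have heq : ∀ K : ℕ, μ {ω | Real.sqrt K ≤ f K ω} = 1 - μ {ω | Real.sqrt K ≤ f K ω}ᶜ := by
      intro K
      rw [measure_compl (hmeas K) (measure_ne_top μ _), measure_univ,
        ENNReal.sub_sub_cancel ENNReal.one_ne_top (measure_mono (Set.subset_univ _) |>.trans_eq measure_univ)]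
    simp only [hCeq]
    rw [show (1 : ENNReal) = 1 - 0 by simp]
    refine Tendsto.congr (fun K => (heq K).symm) ?_
    exact ENNReal.Tendsto.sub tendsto_const_nhds hcompl0 (Or.inl ENNReal.one_ne_top)
end

section
/- Let (Ω, 𝓕, μ) be a probability space and let (B_k)_{k ∈ ℕ} be a sequence of measurable events that are mutually independent with μ(B_k) = ENNReal.ofReal r for every k, where r ∈ [0,1] is a fixed real number. Then for every natural number K ≥ 4, μ( ⋃_{S ⊆ {0,…,K−1}, (|S| : ℝ) > K − 2√K} ⋂_{k ∈ S} B_k ) ≤ ENNReal.ofReal( r^K + 2(1 − r) · r^{K − 2√K} · √K · K^{2√K} ), where powers with real exponents are real powers (rpow) and √K is the real square root of K. -/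
open MeasureTheory ProbabilityTheory in
/-- Probabilistic inequality (12) of Theorem 5: with `B k` mutually independent events
of common probability `r`, for `K ≥ 4`,
`μ(⋃_{S ⊆ range K, |S| > K - 2√K} ⋂_{k ∈ S} B k)
  ≤ r^K + 2(1-r) r^(K - 2√K) √K K^(2√K)`. -/
theorem lili_inter_bound {Ω : Type*} [MeasurableSpace Ω] (μ : Measure Ω)
    [IsProbabilityMeasure μ] (B : ℕ → Set Ω) (hB : ∀ k, MeasurableSet (B k))
    (r : ℝ) (hr0 : 0 ≤ r) (hr1 : r ≤ 1)
    (hindep : iIndepSet B μ) (hprob : ∀ k, μ (B k) = ENNReal.ofReal r)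
    (K : ℕ) (hK : 4 ≤ K) :
    μ (⋃ S ∈ {S : Finset ℕ | S ⊆ Finset.range K ∧ (S.card : ℝ) > (K : ℝ) - 2 * Real.sqrt K},
        ⋂ k ∈ S, B k) ≤
      ENNReal.ofReal (r ^ K +
        2 * (1 - r) * r ^ ((K : ℝ) - 2 * Real.sqrt K) * Real.sqrt K *
          (K : ℝ) ^ (2 * Real.sqrt K)) := by
  classical
  set sK := Real.sqrt K with hsKdef
  have hKR : (4:ℝ) ≤ (K:ℝ) := by exact_mod_cast hK
  have hK0 : (0:ℝ) < K := by linarith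
  have hsK0 : 0 < sK := Real.sqrt_pos.mpr hK0
  have h2sK : 2 * sK ≤ K := by
    have h1 : sK ≤ (K:ℝ)/2 := by
      have : (K:ℝ) ≤ ((K:ℝ)/2)^2 := by nlinarith
      calc sK ≤ Real.sqrt (((K:ℝ)/2)^2) := Real.sqrt_le_sqrt this
        _ = (K:ℝ)/2 := Real.sqrt_sq (by linarith)
    linarith
  have hthresh0 : (0:ℝ) ≤ (K:ℝ) - 2*sK := by linarith
  set A : Finset ℕ → Set Ω :=
    fun T => ⋂ k ∈ Finset.range K, (if k ∈ T then B k else (B k)ᶜ) with hA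
  set 𝒯 : Finset (Finset ℕ) :=
    (Finset.range K).powerset.filter (fun T => ((T.card:ℝ) > (K:ℝ) - 2*sK)) with h𝒯
  -- Step 1: inclusion into the disjoint occupancy events
  have hsub : (⋃ S ∈ {S : Finset ℕ | S ⊆ Finset.range K ∧
      (S.card : ℝ) > (K : ℝ) - 2 * sK}, ⋂ k ∈ S, B k) ⊆ ⋃ T ∈ 𝒯, A T := by
    intro ω hω
    simp only [Set.mem_iUnion, Set.mem_setOf_eq] at hω
    obtain ⟨S, ⟨hSsub, hScard⟩, hωS⟩ := hω
    set T := (Finset.range K).filter (fun k => ω ∈ B k) with hT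
    have hST : S ⊆ T := by
      intro k hk
      exact Finset.mem_filter.mpr ⟨hSsub hk, Set.mem_iInter₂.mp hωS k hk⟩
    have hT𝒯 : T ∈ 𝒯 := by
      refine Finset.mem_filter.mpr ⟨Finset.mem_powerset.mpr (Finset.filter_subset _ _), ?_⟩
      have : S.card ≤ T.card := Finset.card_le_card hST
      have : (S.card:ℝ) ≤ (T.card:ℝ) := by exact_mod_cast this
      linarith
    refine Set.mem_biUnion hT𝒯 ?_
    refine Set.mem_iInter₂.mpr fun k hk => ?_
    by_cases hkT : k ∈ T
    · simp only [hkT, if_true]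
      exact (Finset.mem_filter.mp hkT).2
    · simp only [hkT, if_false]
      intro hωB
      exact hkT (Finset.mem_filter.mpr ⟨hk, hωB⟩)
  -- Step 2: measure of each occupancy event
  have hAmeas : ∀ T ∈ 𝒯, μ (A T) =
      ENNReal.ofReal (r ^ T.card * (1-r) ^ (K - T.card)) := by
    intro T hT
    have hTsub : T ⊆ Finset.range K :=
      Finset.mem_powerset.mp (Finset.mem_filter.mp hT).1
    have hind := (ProbabilityTheory.iIndepSet_iff_iIndep B μ).mp hindep
    have hmeas : ∀ i ∈ Finset.range K,
        MeasurableSet[MeasurableSpace.generateFrom {B i}]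
          (if i ∈ T then B i else (B i)ᶜ) := by
      intro i _
      by_cases hi : i ∈ T
      · simp only [hi, if_true]; exact MeasurableSpace.measurableSet_generateFrom rfl
      · simp only [hi, if_false]
        exact MeasurableSet.compl (m := MeasurableSpace.generateFrom {B i})
          (MeasurableSpace.measurableSet_generateFrom (Set.mem_singleton _))
    have hprod := hind.meas_biInter hmeas
    rw [hA]
    simp only
    rw [hprod]
    have hμf : ∀ i, μ (if i ∈ T then B i else (B i)ᶜ) =
        (if i ∈ T then ENNReal.ofReal r else ENNReal.ofReal (1-r)) := by
      intro i
      by_cases hi : i ∈ T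
      · simp [hi, hprob i]
      · simp only [hi, if_false]
        rw [prob_compl_eq_one_sub (hB i), hprob i]
        rw [← ENNReal.ofReal_one, ← ENNReal.ofReal_sub _ hr0]
    simp only [hμf]
    rw [Finset.prod_ite (fun _ => ENNReal.ofReal r) (fun _ => ENNReal.ofReal (1-r))]
    rw [Finset.prod_const, Finset.prod_const]
    have h1 : (Finset.range K).filter (· ∈ T) = T := by
      rw [Finset.filter_mem_eq_inter, Finset.inter_eq_right.mpr hTsub]
    have h2 : (Finset.range K).filter (fun x => ¬ x ∈ T) = Finset.range K \ T := by
      rw [Finset.sdiff_eq_filter]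
    rw [h1, h2, Finset.card_sdiff_of_subset hTsub, Finset.card_range]
    rw [← ENNReal.ofReal_pow hr0, ← ENNReal.ofReal_pow (by linarith : (0:ℝ) ≤ 1-r),
      ← ENNReal.ofReal_mul (pow_nonneg hr0 _)]
  -- Step 3: union bound and summation
  have hbound : μ (⋃ T ∈ 𝒯, A T) ≤
      ∑ T ∈ 𝒯, ENNReal.ofReal (r ^ T.card * (1-r) ^ (K - T.card)) := by
    refine le_trans (measure_biUnion_finset_le 𝒯 A) ?_
    exact Finset.sum_le_sum fun T hT => le_of_eq (hAmeas T hT)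
  have hsum : ∑ T ∈ 𝒯, ENNReal.ofReal (r ^ T.card * (1-r) ^ (K - T.card)) =
      ENNReal.ofReal (∑ T ∈ 𝒯, r ^ T.card * (1-r) ^ (K - T.card)) :=
    (ENNReal.ofReal_sum_of_nonneg (fun T _ => mul_nonneg (pow_nonneg hr0 _) (pow_nonneg (by linarith) _))).symm
  -- Step 4: the real-valued estimate
  have hfull : Finset.range K ∈ 𝒯 := by
    refine Finset.mem_filter.mpr ⟨Finset.mem_powerset.mpr le_rfl, ?_⟩
    rw [Finset.card_range]
    linarith
  set 𝒯' := 𝒯.erase (Finset.range K) with h𝒯'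
  set D := ⌊2 * sK⌋₊ with hD
  have hDle : (D:ℝ) ≤ 2 * sK := Nat.floor_le (by linarith)
  have hDK : D ≤ K := by
    have : (D:ℝ) ≤ (K:ℝ) := by linarith
    exact_mod_cast this
  -- counting 𝒯'
  have hcount : 𝒯'.card ≤ D * K ^ D := by
    have hsubc : 𝒯' ⊆ (Finset.Icc 1 D).biUnion
        (fun d => (Finset.range K).powersetCard (K - d)) := by
      intro T hT
      have hTne : T ≠ Finset.range K := (Finset.mem_erase.mp hT).1
      have hT𝒯 : T ∈ 𝒯 := (Finset.mem_erase.mp hT).2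
      have hTsub : T ⊆ Finset.range K :=
        Finset.mem_powerset.mp (Finset.mem_filter.mp hT𝒯).1
      have hTcard : ((T.card:ℝ)) > (K:ℝ) - 2*sK := (Finset.mem_filter.mp hT𝒯).2
      have hcK : T.card ≤ K := by
        simpa using Finset.card_le_card hTsub
      have hclt : T.card < K := by
        rcases lt_or_eq_of_le hcK with h | h
        · exact h
        · exact absurd (Finset.eq_of_subset_of_card_le hTsub (by rw [Finset.card_range]; omega)) hTne
      refine Finset.mem_biUnion.mpr ⟨K - T.card, ?_, ?_⟩
      · refine Finset.mem_Icc.mpr ⟨by omega, ?_⟩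
        refine Nat.le_floor ?_
        have : ((K - T.card : ℕ):ℝ) = (K:ℝ) - (T.card:ℝ) := by
          push_cast [Nat.cast_sub hcK]; ring
        rw [this]; linarith
      · exact Finset.mem_powersetCard.mpr ⟨hTsub, by omega⟩
    calc 𝒯'.card ≤ ((Finset.Icc 1 D).biUnion
          (fun d => (Finset.range K).powersetCard (K - d))).card :=
        Finset.card_le_card hsubc
      _ ≤ ∑ d ∈ Finset.Icc 1 D, ((Finset.range K).powersetCard (K - d)).card :=
        Finset.card_biUnion_le
      _ ≤ ∑ d ∈ Finset.Icc 1 D, K ^ D := by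
        refine Finset.sum_le_sum fun d hd => ?_
        have hd1 : 1 ≤ d := (Finset.mem_Icc.mp hd).1
        have hdD : d ≤ D := (Finset.mem_Icc.mp hd).2
        rw [Finset.card_powersetCard, Finset.card_range]
        calc K.choose (K - d) = K.choose d := Nat.choose_symm (by omega : d ≤ K)
          _ ≤ K ^ d := Nat.choose_le_pow K d
          _ ≤ K ^ D := Nat.pow_le_pow_right (by omega) hdD
      _ = D * K ^ D := by
        rw [Finset.sum_const, Nat.card_Icc]
        simp [smul_eq_mul]
  -- per-term bound on 𝒯'
  have hterm : ∀ T ∈ 𝒯', r ^ T.card * (1-r) ^ (K - T.card) ≤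
      (1 - r) * r ^ ((K:ℝ) - 2 * sK) := by
    intro T hT
    have hT𝒯 : T ∈ 𝒯 := (Finset.mem_erase.mp hT).2
    have hTne : T ≠ Finset.range K := (Finset.mem_erase.mp hT).1
    have hTsub : T ⊆ Finset.range K :=
      Finset.mem_powerset.mp (Finset.mem_filter.mp hT𝒯).1
    have hTcard : ((T.card:ℝ)) > (K:ℝ) - 2*sK := (Finset.mem_filter.mp hT𝒯).2
    have hcK : T.card ≤ K := by simpa using Finset.card_le_card hTsub
    have hclt : T.card < K := by
      rcases lt_or_eq_of_le hcK with h | h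
      · exact h
      · exact absurd (Finset.eq_of_subset_of_card_le hTsub (by rw [Finset.card_range]; omega)) hTne
    have hc1 : 1 ≤ T.card := by
      by_contra h
      push_neg at h
      interval_cases h' : T.card <;> simp_all <;> linarith
    have h1 : r ^ T.card ≤ r ^ ((K:ℝ) - 2 * sK) := by
      rcases eq_or_lt_of_le hr0 with h0 | h0
      · rw [← h0, zero_pow (by omega : T.card ≠ 0)]
        exact Real.rpow_nonneg le_rfl _
      · rw [← Real.rpow_natCast r T.card]
        exact Real.rpow_le_rpow_of_exponent_ge h0 hr1 (le_of_lt hTcard)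
    have h2 : (1-r) ^ (K - T.card) ≤ (1-r) := by
      calc (1-r) ^ (K - T.card) ≤ (1-r) ^ 1 :=
          pow_le_pow_of_le_one (by linarith) (by linarith) (by omega)
        _ = 1 - r := pow_one _
    calc r ^ T.card * (1-r) ^ (K - T.card)
        ≤ r ^ ((K:ℝ) - 2 * sK) * (1 - r) :=
          mul_le_mul h1 h2 (pow_nonneg (by linarith) _) (Real.rpow_nonneg hr0 _)
      _ = (1 - r) * r ^ ((K:ℝ) - 2 * sK) := by ring
  -- sum over 𝒯'
  have hsum' : ∑ T ∈ 𝒯', r ^ T.card * (1-r) ^ (K - T.card) ≤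
      2 * sK * (K:ℝ) ^ (2 * sK) * ((1 - r) * r ^ ((K:ℝ) - 2 * sK)) := by
    have h1 : ∑ T ∈ 𝒯', r ^ T.card * (1-r) ^ (K - T.card) ≤
        𝒯'.card • ((1 - r) * r ^ ((K:ℝ) - 2 * sK)) :=
      Finset.sum_le_card_nsmul _ _ _ hterm
    have hnn : (0:ℝ) ≤ (1 - r) * r ^ ((K:ℝ) - 2 * sK) := by
      have := Real.rpow_nonneg hr0 ((K:ℝ) - 2 * sK)
      nlinarith
    have h2 : (𝒯'.card : ℝ) ≤ 2 * sK * (K:ℝ) ^ (2 * sK) := by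
      calc (𝒯'.card : ℝ) ≤ ((D * K ^ D : ℕ) : ℝ) := by exact_mod_cast hcount
        _ = (D:ℝ) * (K:ℝ) ^ (D:ℕ) := by push_cast; ring
        _ ≤ 2 * sK * (K:ℝ) ^ (2 * sK) := by
          have hKpow : (K:ℝ) ^ (D:ℕ) ≤ (K:ℝ) ^ (2 * sK) := by
            rw [← Real.rpow_natCast (K:ℝ) D]
            exact Real.rpow_le_rpow_of_exponent_le (by linarith) hDle
          have hpownn : (0:ℝ) ≤ (K:ℝ) ^ (D:ℕ) := by positivity
          have h2sKnn : (0:ℝ) ≤ 2 * sK := by linarith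
          exact mul_le_mul hDle hKpow hpownn h2sKnn
    calc ∑ T ∈ 𝒯', r ^ T.card * (1-r) ^ (K - T.card)
        ≤ 𝒯'.card • ((1 - r) * r ^ ((K:ℝ) - 2 * sK)) := h1
      _ = (𝒯'.card : ℝ) * ((1 - r) * r ^ ((K:ℝ) - 2 * sK)) := by
          rw [nsmul_eq_mul]
      _ ≤ 2 * sK * (K:ℝ) ^ (2 * sK) * ((1 - r) * r ^ ((K:ℝ) - 2 * sK)) :=
          mul_le_mul_of_nonneg_right h2 hnn
  -- total real sum
  have htotal : ∑ T ∈ 𝒯, r ^ T.card * (1-r) ^ (K - T.card) ≤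
      r ^ K + 2 * (1 - r) * r ^ ((K:ℝ) - 2 * sK) * sK * (K:ℝ) ^ (2 * sK) := by
    rw [← Finset.add_sum_erase 𝒯 _ hfull]
    rw [Finset.card_range, Nat.sub_self, pow_zero, mul_one]
    have := hsum'
    rw [← h𝒯'] at *
    nlinarith [hsum']
  -- conclude
  calc μ (⋃ S ∈ {S : Finset ℕ | S ⊆ Finset.range K ∧
        (S.card : ℝ) > (K : ℝ) - 2 * sK}, ⋂ k ∈ S, B k)
      ≤ μ (⋃ T ∈ 𝒯, A T) := measure_mono hsub
    _ ≤ ∑ T ∈ 𝒯, ENNReal.ofReal (r ^ T.card * (1-r) ^ (K - T.card)) := hbound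
    _ = ENNReal.ofReal (∑ T ∈ 𝒯, r ^ T.card * (1-r) ^ (K - T.card)) := hsum
    _ ≤ ENNReal.ofReal (r ^ K +
        2 * (1 - r) * r ^ ((K : ℝ) - 2 * sK) * sK * (K : ℝ) ^ (2 * sK)) :=
        ENNReal.ofReal_le_ofReal htotal
end

section
/- For all real numbers p and q with 0 < p < 1 and 0 < q < 1, lim_{K→∞} [ (pq)^K + 2(1 − pq)·(pq)^{(K:ℝ) − 2√K}·√K·K^{2√K} ] / (min p q)^{(K:ℝ) − 2√K} = 0, where powers with real exponents are real powers and √K is the real square root of K. -/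
open Filter Real

/-- Equation (13) of Theorem 5: the explicit upper bound on the probability of the
intersection of two LILIs, divided by `min p q ^ (K - 2√K)`, tends to `0`. -/
theorem lili_inter_rate (p q : ℝ) (hp0 : 0 < p) (hp1 : p < 1) (hq0 : 0 < q) (hq1 : q < 1) :
    Filter.Tendsto (fun K : ℕ =>
        ((p * q) ^ K +
            2 * (1 - p * q) * (p * q) ^ ((K : ℝ) - 2 * Real.sqrt K) * Real.sqrt K *
              (K : ℝ) ^ (2 * Real.sqrt K)) /
          (min p q) ^ ((K : ℝ) - 2 * Real.sqrt K))
      Filter.atTop (nhds 0) := by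
  have hm0 : 0 < min p q := lt_min hp0 hq0
  have hm1 : min p q < 1 := min_lt_of_left_lt hp1
  have hr0 : 0 < max p q := lt_of_lt_of_le hp0 (le_max_left _ _)
  have hr1 : max p q < 1 := max_lt hp1 hq1
  have hpq0 : 0 < p * q := mul_pos hp0 hq0
  have hpq1 : p * q < 1 := by nlinarith
  have hmr : Real.log (p * q) = Real.log (min p q) + Real.log (max p q) := by
    rw [← min_mul_max p q, Real.log_mul hm0.ne' hr0.ne']
  have hlogr : Real.log (max p q) < 0 := Real.log_neg hr0 hr1
  have hlogm : Real.log (min p q) < 0 := Real.log_neg hm0 hm1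
  have hNat : Tendsto (fun K : ℕ => (K : ℝ)) atTop atTop := tendsto_natCast_atTop_atTop
  have hSqrt : Tendsto (fun K : ℕ => Real.sqrt K) atTop atTop := by
    have h := tendsto_rpow_atTop (y := (1/2 : ℝ)) (by norm_num)
    refine (h.comp hNat).congr fun K => ?_
    simp [Real.sqrt_eq_rpow, Function.comp]
  have hlogdiv : Tendsto (fun x : ℝ => Real.log x / x) atTop (nhds 0) := by
    simpa using Real.isLittleO_log_id_atTop.tendsto_div_nhds_zero
  -- first summand
  have h1 : Tendsto (fun K : ℕ =>
      (p * q) ^ K / (min p q) ^ ((K : ℝ) - 2 * Real.sqrt K)) atTop (nhds 0) := by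
    have heq : ∀ K : ℕ, (p * q) ^ K / (min p q) ^ ((K : ℝ) - 2 * Real.sqrt K)
        = Real.exp ((K : ℝ) * Real.log (p * q)
            - ((K : ℝ) - 2 * Real.sqrt K) * Real.log (min p q)) := by
      intro K
      rw [← Real.rpow_natCast (p * q) K, Real.rpow_def_of_pos hpq0,
        Real.rpow_def_of_pos hm0, ← Real.exp_sub]
      ring_nf
    have he : Tendsto (fun K : ℕ => (K : ℝ) * Real.log (p * q)
        - ((K : ℝ) - 2 * Real.sqrt K) * Real.log (min p q)) atTop atBot := by
      refine tendsto_atBot_mono (fun K => ?_) (hNat.atTop_mul_const_of_neg hlogr)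
      have h1 : (0:ℝ) ≤ Real.sqrt K := Real.sqrt_nonneg _
      nlinarith [Real.sqrt_nonneg (K:ℝ)]
    simp only [heq]
    exact Real.tendsto_exp_atBot.comp he
  -- second summand
  have h2 : Tendsto (fun K : ℕ =>
      2 * (1 - p * q) * (p * q) ^ ((K : ℝ) - 2 * Real.sqrt K) * Real.sqrt K *
        (K : ℝ) ^ (2 * Real.sqrt K) / (min p q) ^ ((K : ℝ) - 2 * Real.sqrt K))
      atTop (nhds 0) := by
    set c : ℝ := Real.log (2 * (1 - p * q)) with hc
    set φ : ℕ → ℝ := fun K =>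
      (1 - 2 * (Real.sqrt K)⁻¹) * Real.log (max p q)
        + Real.log K / (K * 2) + 4 * (Real.log (Real.sqrt K) / Real.sqrt K) with hφ
    have hφlim : Tendsto φ atTop (nhds (Real.log (max p q))) := by
      have t1 : Tendsto (fun K : ℕ => (Real.sqrt K)⁻¹) atTop (nhds 0) :=
        tendsto_inv_atTop_zero.comp hSqrt
      have t2 : Tendsto (fun K : ℕ => Real.log K / ((K : ℝ) * 2)) atTop (nhds 0) := by
        have := (hlogdiv.comp hNat).div_const 2
        simpa [div_div] using this
      have t3 : Tendsto (fun K : ℕ => Real.log (Real.sqrt K) / Real.sqrt K)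
          atTop (nhds 0) := hlogdiv.comp hSqrt
      have hA := ((tendsto_const_nhds (x := (1:ℝ)) (f := atTop)).sub
        (t1.const_mul 2)).mul_const (Real.log (max p q))
      simpa using (hA.add t2).add (t3.const_mul 4)
    have hKφ : Tendsto (fun K : ℕ => c + (K : ℝ) * φ K) atTop atBot :=
      tendsto_atBot_add_const_left _ c (hNat.atTop_mul_neg hlogr hφlim)
    have heq : ∀ᶠ K : ℕ in atTop,
        2 * (1 - p * q) * (p * q) ^ ((K : ℝ) - 2 * Real.sqrt K) * Real.sqrt K *
          (K : ℝ) ^ (2 * Real.sqrt K) / (min p q) ^ ((K : ℝ) - 2 * Real.sqrt K)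
        = Real.exp (c + (K : ℝ) * φ K) := by
      filter_upwards [eventually_ge_atTop 1] with K hK
      have hK0 : (0:ℝ) < (K : ℝ) := by exact_mod_cast Nat.lt_of_lt_of_le Nat.zero_lt_one hK
      have hs0 : 0 < Real.sqrt K := Real.sqrt_pos.2 hK0
      have hss : Real.sqrt K * Real.sqrt K = (K : ℝ) := Real.mul_self_sqrt hK0.le
      have hlogs : Real.log (Real.sqrt K) = Real.log K / 2 := Real.log_sqrt hK0.le
      have h2pos : (0:ℝ) < 2 * (1 - p * q) := by nlinarith
      have key : c + (K : ℝ) * φ K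
          = c + (Real.log (p * q) * ((K : ℝ) - 2 * Real.sqrt K)
              + Real.log (Real.sqrt K) + Real.log K * (2 * Real.sqrt K))
            - Real.log (min p q) * ((K : ℝ) - 2 * Real.sqrt K) := by
        simp only [hφ]
        rw [hlogs, hmr]
        field_simp
        ring_nf
        linear_combination (4 * (Real.log (max p q) - Real.log K)) * hss
      rw [key, Real.exp_sub, Real.exp_add, Real.exp_add, Real.exp_add,
        ← Real.rpow_def_of_pos hpq0, ← Real.rpow_def_of_pos hK0,
        ← Real.rpow_def_of_pos hm0, Real.exp_log hs0, Real.exp_log h2pos]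
      ring
    refine Tendsto.congr' (heq.mono fun K h => h.symm) ?_
    exact Real.tendsto_exp_atBot.comp hKφ
  have := h1.add h2
  simp only [add_zero] at this
  refine this.congr fun K => ?_
  rw [add_div]
end

section
/- Let (Ω, 𝓕, μ) be a probability space and let (A_k)_{k ∈ ℕ} be a sequence of measurable events that are mutually independent with μ(A_k) = ENNReal.ofReal p for every k, where 0 < p < 1. Let f : ℕ → ℝ satisfy 0 < f(K) < K for all K ≥ 1, and suppose that (f(K)·ln K)/K converges as K → ∞ to a limit c with c < −ln p. Then μ( ⋃_{S ⊆ {0,…,K−1}, (|S| : ℝ) > K − f(K)} ⋂_{k ∈ S} A_k ) → 0 as K → ∞. -/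
open MeasureTheory ProbabilityTheory Filter ENNReal in
lemma lili_count_bound (K : ℕ) (hK : 1 ≤ K) (r : ℝ) :
    (((Finset.range K).powerset.filter
        (fun S => (S.card : ℝ) > (K : ℝ) - r)).card : ℕ)
      ≤ (⌊r⌋₊ + 1) * K ^ ⌊r⌋₊ := by
  set m := ⌊r⌋₊
  have hsub : (Finset.range K).powerset.filter (fun S => (S.card : ℝ) > (K : ℝ) - r)
      ⊆ ((Finset.range K).powerset.filter (fun T => T.card ≤ m)).image
          (fun T => Finset.range K \ T) := by
    intro S hS
    simp only [Finset.mem_filter, Finset.mem_powerset] at hS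
    obtain ⟨hSsub, hScard⟩ := hS
    refine Finset.mem_image.mpr ⟨Finset.range K \ S, ?_, ?_⟩
    · simp only [Finset.mem_filter, Finset.mem_powerset]
      refine ⟨Finset.sdiff_subset, ?_⟩
      have hcard : (Finset.range K \ S).card = K - S.card := by
        rw [Finset.card_sdiff_of_subset hSsub, Finset.card_range]
      rw [hcard]
      apply Nat.le_floor
      have hle : (S.card : ℝ) ≤ K := by
        exact_mod_cast (Finset.card_le_card hSsub).trans_eq (Finset.card_range K)
      have : ((K - S.card : ℕ) : ℝ) = (K : ℝ) - S.card := by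
        have := Finset.card_le_card hSsub
        rw [Finset.card_range] at this
        push_cast [this]; ring
      rw [this]
      linarith
    · exact Finset.sdiff_sdiff_eq_self hSsub
  calc _ ≤ (((Finset.range K).powerset.filter (fun T => T.card ≤ m)).image
          (fun T => Finset.range K \ T)).card := Finset.card_le_card hsub
    _ ≤ ((Finset.range K).powerset.filter (fun T => T.card ≤ m)).card :=
        Finset.card_image_le
    _ ≤ ((Finset.range (m+1)).biUnion
          (fun j => (Finset.range K).powersetCard j)).card := by
        apply Finset.card_le_card
        intro T hT
        simp only [Finset.mem_filter, Finset.mem_powerset] at hT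
        simp only [Finset.mem_biUnion, Finset.mem_range, Finset.mem_powersetCard]
        exact ⟨T.card, Nat.lt_succ_of_le hT.2, hT.1, rfl⟩
    _ ≤ ∑ j ∈ Finset.range (m+1), ((Finset.range K).powersetCard j).card :=
        Finset.card_biUnion_le
    _ ≤ ∑ j ∈ Finset.range (m+1), K ^ m := by
        apply Finset.sum_le_sum
        intro j hj
        rw [Finset.card_powersetCard, Finset.card_range]
        exact (Nat.choose_le_pow K j).trans
          (Nat.pow_le_pow_right hK (Nat.lt_succ_iff.mp (Finset.mem_range.mp hj)))
    _ = (m+1) * K ^ m := by simp [Finset.sum_const, Finset.card_range, mul_comm]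

open MeasureTheory ProbabilityTheory Filter ENNReal in
lemma lili_measure_bound {Ω : Type*} [MeasurableSpace Ω] (μ : Measure Ω)
    [IsProbabilityMeasure μ] (A : ℕ → Set Ω)
    (p : ℝ) (hp0 : 0 < p) (hp1 : p < 1)
    (hindep : iIndepSet A μ) (hprob : ∀ k, μ (A k) = ENNReal.ofReal p)
    (f : ℕ → ℝ) (K : ℕ) (hK : 1 ≤ K)
    (hcount : (((Finset.range K).powerset.filter
        (fun S => (S.card : ℝ) > (K : ℝ) - f K)).card : ℕ)
      ≤ (⌊f K⌋₊ + 1) * K ^ ⌊f K⌋₊) :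
    μ (⋃ S ∈ {S : Finset ℕ | S ⊆ Finset.range K ∧ (S.card : ℝ) > (K : ℝ) - f K},
        ⋂ k ∈ S, A k)
      ≤ ENNReal.ofReal ((((⌊f K⌋₊ : ℝ) + 1) * (K : ℝ) ^ ⌊f K⌋₊)
          * p ^ ⌈(K : ℝ) - f K⌉₊) := by
  set 𝒮 := (Finset.range K).powerset.filter
      (fun S => (S.card : ℝ) > (K : ℝ) - f K) with h𝒮
  have hset : {S : Finset ℕ | S ⊆ Finset.range K ∧ (S.card : ℝ) > (K : ℝ) - f K}
      = (𝒮 : Set (Finset ℕ)) := by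
    ext S; simp [h𝒮, Finset.mem_powerset]
  rw [hset]
  have hstep : ∀ S ∈ 𝒮, μ (⋂ k ∈ S, A k) ≤ ENNReal.ofReal (p ^ ⌈(K : ℝ) - f K⌉₊) := by
    intro S hS
    have hcard : ⌈(K : ℝ) - f K⌉₊ ≤ S.card := by
      simp only [h𝒮, Finset.mem_filter, Finset.mem_powerset] at hS
      exact Nat.ceil_le.mpr hS.2.le
    have hmeas : μ (⋂ k ∈ S, A k) = ENNReal.ofReal (p ^ S.card) := by
      rw [hindep.meas_biInter S]
      simp_rw [hprob]
      rw [Finset.prod_const, ← ENNReal.ofReal_pow hp0.le]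
    rw [hmeas]
    exact ENNReal.ofReal_le_ofReal
      (pow_le_pow_of_le_one hp0.le hp1.le hcard)
  calc μ (⋃ S ∈ (𝒮 : Set (Finset ℕ)), ⋂ k ∈ S, A k)
      ≤ ∑ S ∈ 𝒮, μ (⋂ k ∈ S, A k) := measure_biUnion_finset_le 𝒮 _
    _ ≤ ∑ _S ∈ 𝒮, ENNReal.ofReal (p ^ ⌈(K : ℝ) - f K⌉₊) := Finset.sum_le_sum hstep
    _ = (𝒮.card : ℝ≥0∞) * ENNReal.ofReal (p ^ ⌈(K : ℝ) - f K⌉₊) := by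
        rw [Finset.sum_const, nsmul_eq_mul]
    _ ≤ (((⌊f K⌋₊ + 1) * K ^ ⌊f K⌋₊ : ℕ) : ℝ≥0∞)
          * ENNReal.ofReal (p ^ ⌈(K : ℝ) - f K⌉₊) := by
        gcongr
    _ = ENNReal.ofReal ((((⌊f K⌋₊ : ℝ) + 1) * (K : ℝ) ^ ⌊f K⌋₊)
          * p ^ ⌈(K : ℝ) - f K⌉₊) := by
        rw [ENNReal.ofReal_mul (by positivity)]
        congr 1
        rw [← ENNReal.ofReal_natCast]
        congr 1
        push_cast
        ring

open MeasureTheory ProbabilityTheory Filter ENNReal in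
lemma lili_limit_zero (p : ℝ) (hp0 : 0 < p) (hp1 : p < 1)
    (f : ℕ → ℝ) (hf : ∀ K : ℕ, 1 ≤ K → 0 < f K ∧ f K < K)
    (c : ℝ) (hc : Tendsto (fun K : ℕ => f K * Real.log K / K) atTop (nhds c))
    (hcp : c < -Real.log p) :
    Tendsto (fun K : ℕ => (((⌊f K⌋₊ : ℝ) + 1) * (K : ℝ) ^ ⌊f K⌋₊)
        * p ^ ⌈(K : ℝ) - f K⌉₊) atTop (nhds 0) := by
  have hlogp : Real.log p < 0 := Real.log_neg hp0 hp1
  -- f K / K → 0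
  have hratio : Tendsto (fun K : ℕ => f K / K) atTop (nhds 0) := by
    have hinv : Tendsto (fun K : ℕ => (Real.log K)⁻¹) atTop (nhds 0) := by
      apply Tendsto.comp tendsto_inv_atTop_zero
      exact Real.tendsto_log_atTop.comp tendsto_natCast_atTop_atTop
    have h := hc.mul hinv
    rw [mul_zero] at h
    apply h.congr'
    filter_upwards [eventually_ge_atTop 2] with K hK
    have hlog : Real.log K ≠ 0 := by
      have h1 : (1:ℝ) < K := by exact_mod_cast Nat.lt_of_lt_of_le one_lt_two hK
      exact ne_of_gt (Real.log_pos h1)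
    have hK0 : (K:ℝ) ≠ 0 := by positivity
    field_simp
  -- u K → c + log p
  set u : ℕ → ℝ := fun K => f K / K + f K * Real.log K / K + (1 - f K / K) * Real.log p
    with hu
  have hulim : Tendsto u atTop (nhds (c + Real.log p)) := by
    have h1 : Tendsto (fun K : ℕ => (1 - f K / K) * Real.log p) atTop
        (nhds ((1 - 0) * Real.log p)) := (tendsto_const_nhds.sub hratio).mul tendsto_const_nhds
    have h2 := (hratio.add hc).add h1
    simpa using h2
  have hneg : c + Real.log p < 0 := by linarith
  -- K * u K → -∞
  have hKu : Tendsto (fun K : ℕ => (K : ℝ) * u K) atTop atBot := by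
    have hhalf : Tendsto (fun K : ℕ => (K : ℝ) * ((c + Real.log p) / 2)) atTop atBot := by
      simpa [mul_comm] using
        (tendsto_natCast_atTop_atTop (R := ℝ)).atTop_mul_const_of_neg
          (show (c + Real.log p) / 2 < 0 by linarith)
    refine tendsto_atBot_mono' atTop ?_ hhalf
    filter_upwards [hulim.eventually (eventually_le_nhds (show c + Real.log p
        < (c + Real.log p) / 2 by linarith))] with K hK
    exact mul_le_mul_of_nonneg_left hK (Nat.cast_nonneg K)
  have hexp : Tendsto (fun K : ℕ => Real.exp ((K : ℝ) * u K)) atTop (nhds 0) :=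
    Real.tendsto_exp_atBot.comp hKu
  -- squeeze
  refine squeeze_zero' ?_ ?_ hexp
  · filter_upwards with K
    positivity
  · filter_upwards [eventually_ge_atTop 1] with K hK
    set m := ⌊f K⌋₊
    set n := ⌈(K : ℝ) - f K⌉₊
    have hfK := hf K hK
    have hb : (0:ℝ) < ((m : ℝ) + 1) * (K : ℝ) ^ m * p ^ n := by positivity
    rw [← Real.exp_log hb]
    apply Real.exp_le_exp.mpr
    have hK1 : (1:ℝ) ≤ K := by exact_mod_cast hK
    have hlogK : 0 ≤ Real.log K := Real.log_nonneg hK1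
    have hm : (m : ℝ) ≤ f K := Nat.floor_le hfK.1.le
    have hn : (K : ℝ) - f K ≤ n := Nat.le_ceil _
    have hlog1 : Real.log (((m : ℝ) + 1) * (K : ℝ) ^ m * p ^ n)
        = Real.log ((m : ℝ) + 1) + (m : ℝ) * Real.log K + (n : ℝ) * Real.log p := by
      rw [Real.log_mul (by positivity) (by positivity),
        Real.log_mul (by positivity) (by positivity), Real.log_pow, Real.log_pow]
      try push_cast
      try ring
    rw [hlog1]
    have e1 : Real.log ((m : ℝ) + 1) ≤ f K := by
      have := Real.log_le_sub_one_of_pos (show (0:ℝ) < (m:ℝ)+1 by positivity)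
      linarith
    have e2 : (m : ℝ) * Real.log K ≤ f K * Real.log K :=
      mul_le_mul_of_nonneg_right hm hlogK
    have e3 : (n : ℝ) * Real.log p ≤ ((K : ℝ) - f K) * Real.log p :=
      mul_le_mul_of_nonpos_right hn hlogp.le
    have hKne : (K:ℝ) ≠ 0 := by positivity
    have huval : (K : ℝ) * u K = f K + f K * Real.log K + ((K : ℝ) - f K) * Real.log p := by
      simp only [hu]
      field_simp
      try ring
    rw [huval]
    linarith

open MeasureTheory ProbabilityTheory Filter in
/-- Theorem 7 (LILI extension), first part: if the tolerance function `f` satisfies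
`0 < f K < K` and `f K · ln K / K → c < -ln p`, then the probability of the LILI event
with tolerance `f` tends to `0`. -/
theorem lili_tolerance_zero {Ω : Type*} [MeasurableSpace Ω] (μ : Measure Ω)
    [IsProbabilityMeasure μ] (A : ℕ → Set Ω) (hA : ∀ k, MeasurableSet (A k))
    (p : ℝ) (hp0 : 0 < p) (hp1 : p < 1)
    (hindep : iIndepSet A μ) (hprob : ∀ k, μ (A k) = ENNReal.ofReal p)
    (f : ℕ → ℝ) (hf : ∀ K : ℕ, 1 ≤ K → 0 < f K ∧ f K < K)
    (c : ℝ) (hc : Tendsto (fun K : ℕ => f K * Real.log K / K) atTop (nhds c))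
    (hcp : c < -Real.log p) :
    Tendsto (fun K : ℕ =>
        μ (⋃ S ∈ {S : Finset ℕ | S ⊆ Finset.range K ∧ (S.card : ℝ) > (K : ℝ) - f K},
            ⋂ k ∈ S, A k)) atTop (nhds 0) := by
  have hb := lili_limit_zero p hp0 hp1 f hf c hc hcp
  have hofReal : Tendsto (fun K : ℕ => ENNReal.ofReal ((((⌊f K⌋₊ : ℝ) + 1)
      * (K : ℝ) ^ ⌊f K⌋₊) * p ^ ⌈(K : ℝ) - f K⌉₊)) atTop (nhds 0) := by
    rw [← ENNReal.ofReal_zero]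
    exact ENNReal.tendsto_ofReal hb
  refine tendsto_of_tendsto_of_tendsto_of_le_of_le' tendsto_const_nhds hofReal
    (Eventually.of_forall fun K => zero_le) ?_
  filter_upwards [eventually_ge_atTop 1] with K hK
  exact lili_measure_bound μ A p hp0 hp1 hindep hprob f K hK
    (lili_count_bound K hK (f K))
end

section
/- Let (Ω, 𝓕, μ) be a probability space and let (A_k)_{k ∈ ℕ} be a sequence of measurable events that are mutually independent with μ(A_k) = ENNReal.ofReal p for every k, where 0 < p < 1/2. Let f : ℕ → ℝ satisfy 0 < f(K) < K for all K ≥ 1 and f(K)/K → 0 as K → ∞. Then μ( ⋃_{S ⊆ {0,…,K−1}, (|S| : ℝ) > K − f(K)} ⋂_{k ∈ S} A_k ) → 0 as K → ∞. -/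
open MeasureTheory ProbabilityTheory Filter in
/-- Theorem 7 (LILI extension), second part: if `p < 1/2` then the condition
`f K / K → 0` alone suffices for the probability of the LILI event with tolerance `f`
to tend to `0`. -/
theorem lili_tolerance_zero_of_lt_half {Ω : Type*} [MeasurableSpace Ω] (μ : Measure Ω)
    [IsProbabilityMeasure μ] (A : ℕ → Set Ω) (hA : ∀ k, MeasurableSet (A k))
    (p : ℝ) (hp0 : 0 < p) (hp1 : p < 1 / 2)
    (hindep : iIndepSet A μ) (hprob : ∀ k, μ (A k) = ENNReal.ofReal p)
    (f : ℕ → ℝ) (hf : ∀ K : ℕ, 1 ≤ K → 0 < f K ∧ f K < K)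
    (hf0 : Tendsto (fun K : ℕ => f K / K) atTop (nhds 0)) :
    Tendsto (fun K : ℕ =>
        μ (⋃ S ∈ {S : Finset ℕ | S ⊆ Finset.range K ∧ (S.card : ℝ) > (K : ℝ) - f K},
            ⋂ k ∈ S, A k)) atTop (nhds 0) := by
  have hp1' : p ≤ 1 := by linarith
  have hlogp : Real.log p < 0 := Real.log_neg hp0 (by linarith)
  set c : ℝ := Real.log (2 * p) with hc
  have hc0 : c < 0 := Real.log_neg (by positivity) (by linarith)
  -- real bounding sequence
  set g : ℕ → ℝ := fun K => 2 ^ K * p ^ ((K : ℝ) - f K) with hg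
  have hg0 : ∀ K, 0 ≤ g K := fun K => by
    have := Real.rpow_pos_of_pos hp0 ((K : ℝ) - f K)
    positivity
  -- measure bound
  have hbound : ∀ K : ℕ,
      μ (⋃ S ∈ {S : Finset ℕ | S ⊆ Finset.range K ∧ (S.card : ℝ) > (K : ℝ) - f K},
          ⋂ k ∈ S, A k) ≤ ENNReal.ofReal (g K) := by
    intro K
    set 𝒮 : Finset (Finset ℕ) :=
      (Finset.range K).powerset.filter (fun S => (S.card : ℝ) > (K : ℝ) - f K) with h𝒮
    have hset : {S : Finset ℕ | S ⊆ Finset.range K ∧ (S.card : ℝ) > (K : ℝ) - f K}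
        = (𝒮 : Set (Finset ℕ)) := by
      ext S; simp [h𝒮, and_comm]
    rw [hset]
    calc μ (⋃ S ∈ (𝒮 : Set (Finset ℕ)), ⋂ k ∈ S, A k)
        ≤ ∑ S ∈ 𝒮, μ (⋂ k ∈ S, A k) := by
          rw [Finset.set_biUnion_coe]
          exact measure_biUnion_finset_le 𝒮 _
      _ ≤ ∑ S ∈ 𝒮, ENNReal.ofReal (p ^ ((K : ℝ) - f K)) := by
          refine Finset.sum_le_sum fun S hS => ?_
          rw [hindep.meas_biInter S]
          simp only [hprob, Finset.prod_const]
          rw [← ENNReal.ofReal_pow hp0.le]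
          refine ENNReal.ofReal_le_ofReal ?_
          have hcard : (K : ℝ) - f K ≤ (S.card : ℝ) := by
            have := (Finset.mem_filter.1 hS).2
            linarith
          calc (p : ℝ) ^ S.card = p ^ ((S.card : ℝ)) := by
                rw [← Real.rpow_natCast]
            _ ≤ p ^ ((K : ℝ) - f K) :=
                Real.rpow_le_rpow_of_exponent_ge hp0 hp1' hcard
      _ = (𝒮.card : ENNReal) * ENNReal.ofReal (p ^ ((K : ℝ) - f K)) := by
          rw [Finset.sum_const, nsmul_eq_mul]
      _ ≤ ((2 ^ K : ℕ) : ENNReal) * ENNReal.ofReal (p ^ ((K : ℝ) - f K)) := by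
          gcongr
          exact_mod_cast le_trans (Finset.card_le_card (Finset.filter_subset _ _))
            (le_of_eq (by simp))
      _ = ENNReal.ofReal (g K) := by
          rw [hg, ENNReal.ofReal_mul (by positivity)]
          congr 1
          simp [ENNReal.ofReal_pow]
  -- real tendsto
  have hgt : Tendsto g atTop (nhds 0) := by
    have hε : 0 < (-c / 2) / (-Real.log p) := by
      apply div_pos <;> linarith
    have hev : ∀ᶠ K : ℕ in atTop, f K / K < (-c / 2) / (-Real.log p) := by
      have := hf0.eventually (gt_mem_nhds hε)
      exact this
    have hbd : ∀ᶠ K : ℕ in atTop, g K ≤ Real.exp (c / 2) ^ K := by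
      filter_upwards [hev, eventually_ge_atTop 1] with K hK hK1
      have hKpos : (0 : ℝ) < K := by exact_mod_cast hK1
      have hfK : f K * (-Real.log p) ≤ (-c / 2) * K := by
        have h1 : f K < ((-c / 2) / (-Real.log p)) * K := by
          rw [div_lt_iff₀ hKpos] at hK; linarith
        have h2 : f K * (-Real.log p) < ((-c / 2) / (-Real.log p)) * K * (-Real.log p) := by
          apply mul_lt_mul_of_pos_right h1; linarith
        have hlp : Real.log p ≠ 0 := ne_of_lt hlogp
        have h3 : ((-c / 2) / (-Real.log p)) * K * (-Real.log p) = (-c / 2) * K := by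
          field_simp
        linarith [h2, h3.le]
      have hexp : g K = Real.exp ((K : ℝ) * Real.log 2 + Real.log p * ((K : ℝ) - f K)) := by
        rw [hg, Real.exp_add, ← Real.rpow_def_of_pos hp0]
        congr 1
        rw [Real.exp_nat_mul, Real.exp_log (by norm_num : (0:ℝ) < 2)]
      rw [hexp, ← Real.exp_nat_mul]
      apply Real.exp_le_exp.2
      have hcK : c = Real.log 2 + Real.log p := by
        rw [hc, Real.log_mul (by norm_num) (ne_of_gt hp0)]
      nlinarith [mul_le_mul_of_nonneg_left (le_of_eq hcK) hKpos.le]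
    have hgeo : Tendsto (fun K : ℕ => Real.exp (c / 2) ^ K) atTop (nhds 0) := by
      apply tendsto_pow_atTop_nhds_zero_of_lt_one (Real.exp_pos _).le
      exact Real.exp_lt_one_iff.2 (by linarith)
    exact tendsto_of_tendsto_of_tendsto_of_le_of_le' tendsto_const_nhds hgeo
      (Eventually.of_forall hg0) hbd
  -- conclude
  have : Tendsto (fun K => ENNReal.ofReal (g K)) atTop (nhds 0) := by
    simpa [Function.comp_def] using (ENNReal.continuous_ofReal.tendsto 0).comp hgt
  exact tendsto_of_tendsto_of_tendsto_of_le_of_le' tendsto_const_nhds this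
    (Eventually.of_forall fun K => zero_le) (Eventually.of_forall hbound)
end

section
/- Let (Ω, 𝓕, μ) be a probability space and let (A_k)_{k ∈ ℕ} be a sequence of measurable events that are mutually independent with μ(A_k) = ENNReal.ofReal p for every k, where 0 < p ≤ 1. Let f : ℕ → ℝ satisfy 0 < f(K) < K for all K ≥ 1 and (K − f(K))/ln K → 0 as K → ∞. Then μ( ⋃_{S ⊆ {0,…,K−1}, (|S| : ℝ) > K − f(K)} ⋂_{k ∈ S} A_k ) → 1 as K → ∞. -/
open Finset
lemma lili_aux_subset {Ω : Type*} (A : ℕ → Set Ω) (K m L : ℕ) (g : ℝ)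
    (hgm : g < m + 1) (hKL : (m + 1) * L ≤ K) (hL : 1 ≤ L) :
    (⋃ S ∈ {S : Finset ℕ | S ⊆ Finset.range K ∧ (S.card : ℝ) > g}, ⋂ k ∈ S, A k)ᶜ ⊆
      ⋃ i ∈ Finset.range (m + 1), ⋂ k ∈ Finset.Ico (i * L) (i * L + L), (A k)ᶜ := by
  classical
  intro ω hω
  rw [Set.mem_compl_iff] at hω
  set F : Finset ℕ := (Finset.range K).filter (fun k => ω ∈ A k) with hF
  have hFcard : (F.card : ℝ) ≤ g := by
    by_contra h
    push_neg at h
    exact hω (Set.mem_biUnion (show F ∈ {S : Finset ℕ | S ⊆ Finset.range K ∧ (S.card : ℝ) > g}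
      from ⟨Finset.filter_subset _ _, h⟩)
      (Set.mem_iInter₂.2 fun k hk => (Finset.mem_filter.1 hk).2))
  have hFm : F.card ≤ m := by
    have : (F.card : ℝ) < (m : ℝ) + 1 := lt_of_le_of_lt hFcard hgm
    exact_mod_cast Nat.lt_add_one_iff.mp (by exact_mod_cast this)
  have hex : ∃ i ∈ Finset.range (m + 1), ∀ k ∈ Finset.Ico (i * L) (i * L + L), ω ∉ A k := by
    by_contra hco
    push_neg at hco
    choose c hc1 hc2 using hco
    have hmaps : ∀ i (hi : i ∈ Finset.range (m+1)), c i hi ∈ F := by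
      intro i hi
      rw [Finset.mem_filter]
      refine ⟨Finset.mem_range.2 ?_, hc2 i hi⟩
      have h1 := (Finset.mem_Ico.1 (hc1 i hi)).2
      have h2 : i * L + L ≤ (m+1) * L := by
        have : i + 1 ≤ m + 1 := Finset.mem_range.1 hi
        calc i * L + L = (i+1) * L := by ring
          _ ≤ (m+1) * L := Nat.mul_le_mul_right L this
      omega
    have hinj : ∀ i (hi : i ∈ Finset.range (m+1)) j (hj : j ∈ Finset.range (m+1)),
        c i hi = c j hj → i = j := by
      intro i hi j hj hij
      have h1 := Finset.mem_Ico.1 (hc1 i hi)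
      have h2 := Finset.mem_Ico.1 (hc1 j hj)
      rw [hij] at h1
      rcases lt_trichotomy i j with h | h | h
      · exfalso
        have : i * L + L ≤ j * L := by
          calc i * L + L = (i+1)*L := by ring
            _ ≤ j * L := Nat.mul_le_mul_right L h
        omega
      · exact h
      · exfalso
        have : j * L + L ≤ i * L := by
          calc j * L + L = (j+1)*L := by ring
            _ ≤ i * L := Nat.mul_le_mul_right L h
        omega
    have := Finset.card_le_card_of_injOn
      (fun i => if hi : i ∈ Finset.range (m+1) then c i hi else 0)
      (fun i hi => by
        have hi' : i ∈ Finset.range (m+1) := hi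
        simp only [dif_pos hi']
        exact hmaps i hi')
      (fun i hi j hj hij => by
        have hi' : i ∈ Finset.range (m+1) := hi
        have hj' : j ∈ Finset.range (m+1) := hj
        simp only [dif_pos hi', dif_pos hj'] at hij
        exact hinj i hi' j hj' hij)
    simp only [Finset.card_range] at this
    omega
  obtain ⟨i, hi, hik⟩ := hex
  exact Set.mem_biUnion hi (Set.mem_iInter₂.2 fun k hk => hik k hk)

open Filter Real

lemma lili_aux_tendsto (q : ℝ) (hq0 : 0 < q) (hq1 : q < 1) (m L : ℕ → ℕ) (g : ℕ → ℝ)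
    (hmg : ∀ᶠ K in atTop, (m K : ℝ) ≤ g K)
    (hg : Tendsto (fun K : ℕ => g K / Real.log K) atTop (nhds 0))
    (hL : ∀ᶠ K : ℕ in atTop, (K : ℝ) / ((m K : ℝ) + 1) - 1 ≤ (L K : ℝ)) :
    Tendsto (fun K => ((m K : ℝ) + 1) * q ^ (L K)) atTop (nhds 0) := by
  set c : ℝ := -Real.log q with hc
  have hcpos : 0 < c := by
    have := Real.log_neg hq0 hq1
    simp only [hc]; linarith
  have hlog : Tendsto (fun K : ℕ => Real.log K) atTop atTop :=
    Real.tendsto_log_atTop.comp tendsto_natCast_atTop_atTop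
  have hsmall : ∀ᶠ K : ℕ in atTop, |g K / Real.log K| < 1/2 := by
    have := Metric.tendsto_nhds.mp hg (1/2) (by norm_num)
    filter_upwards [this] with K h
    rw [Real.dist_eq, sub_zero] at h
    exact h
  have hm1 : ∀ᶠ K : ℕ in atTop, (m K : ℝ) + 1 ≤ Real.log K := by
    filter_upwards [hsmall, hmg, hlog.eventually_ge_atTop 2] with K h1 h2 h3
    have hlogpos : (0:ℝ) < Real.log K := by linarith
    have hgK : g K < (1/2) * Real.log K := by
      have habs := (abs_lt.1 h1).2
      calc g K = (g K / Real.log K) * Real.log K := by field_simp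
        _ < (1/2) * Real.log K := mul_lt_mul_of_pos_right habs hlogpos
    nlinarith
  have h2log : ∀ᶠ K : ℕ in atTop, 2 * Real.log K ≤ (K:ℝ) := by
    filter_upwards [eventually_ge_atTop 16] with K hK
    have hK16 : (16:ℝ) ≤ K := by exact_mod_cast hK
    have hKpos : (0:ℝ) < K := by linarith
    have hsq : Real.log K ≤ 2 * Real.sqrt K := by
      have h1 : Real.log (Real.sqrt K) = Real.log K / 2 := Real.log_sqrt hKpos.le
      have h2 : Real.log (Real.sqrt K) ≤ Real.sqrt K - 1 :=
        Real.log_le_sub_one_of_pos (Real.sqrt_pos.2 hKpos)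
      linarith
    have hs16 : Real.sqrt 16 = 4 := by
      rw [show (16:ℝ) = 4^2 by norm_num, Real.sqrt_sq (by norm_num)]
    have h4 : 4 * Real.sqrt K ≤ K := by
      have h5 : Real.sqrt K * Real.sqrt K = K := Real.mul_self_sqrt hKpos.le
      have h6 : (4:ℝ) ≤ Real.sqrt K := hs16 ▸ Real.sqrt_le_sqrt hK16
      nlinarith
    linarith
  have hLbig : ∀ᶠ K : ℕ in atTop, (K:ℝ) / (2 * Real.log K) ≤ L K ∧
      1 ≤ (K:ℝ) / (2 * Real.log K) := by
    filter_upwards [hm1, hL, h2log, hlog.eventually_ge_atTop 2, eventually_ge_atTop 1]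
      with K h1 h2 h3 h4 h5
    have hlogpos : (0:ℝ) < Real.log K := by linarith
    have hKpos : (0:ℝ) < K := by exact_mod_cast h5
    have hdiv : (K:ℝ) / Real.log K ≤ (K:ℝ) / ((m K : ℝ) + 1) :=
      div_le_div_of_nonneg_left hKpos.le (by positivity) h1
    have h6 : (1:ℝ) ≤ (K:ℝ) / (2 * Real.log K) := by
      rw [le_div_iff₀ (by positivity)]
      linarith
    refine ⟨?_, h6⟩
    have h7 : (K:ℝ) / Real.log K = 2 * ((K:ℝ) / (2 * Real.log K)) := by
      field_simp
    have h8 : (K:ℝ) / (2 * Real.log K) ≤ (K:ℝ) / Real.log K - 1 := by linarith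
    linarith [h2, hdiv]
  have hbound : ∀ᶠ K : ℕ in atTop,
      ((m K : ℝ) + 1) * q ^ (L K) ≤ (48 / c^3) * (Real.log K ^ 4 / (1 * K + 0)) := by
    filter_upwards [hm1, hLbig, hlog.eventually_ge_atTop 2, eventually_ge_atTop 1]
      with K h1 hpair h3 h4
    obtain ⟨h2, h2'⟩ := hpair
    have hlogpos : (0:ℝ) < Real.log K := by linarith
    have hKpos : (0:ℝ) < K := by exact_mod_cast h4
    have hK1 : (1:ℝ) ≤ K := by exact_mod_cast h4
    set r : ℝ := (K:ℝ) / (2 * Real.log K) with hr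
    have hrpos : (0:ℝ) < r := by positivity
    have hLr : r ≤ (L K : ℝ) := h2
    have hqL : q ^ (L K) = Real.exp (-(c * L K)) := by
      conv_lhs => rw [← Real.exp_log hq0]
      rw [← Real.exp_nat_mul]
      congr 1
      simp only [hc]
      ring
    have hexp : (c * L K)^3 / 6 ≤ Real.exp (c * L K) := by
      have h9 := Real.pow_div_factorial_le_exp (x := c * L K) (by positivity) 3
      norm_num [Nat.factorial] at h9 ⊢
      linarith
    have hcr3 : (c * r)^3 ≤ (c * (L K : ℝ))^3 := by
      have : c * r ≤ c * L K := mul_le_mul_of_nonneg_left hLr hcpos.le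
      have h0 : (0:ℝ) ≤ c * r := by positivity
      exact pow_le_pow_left₀ h0 this 3
    have hq6 : q ^ (L K) ≤ 6 / (c * r)^3 := by
      rw [hqL, Real.exp_neg]
      have h11 : (c * r)^3 / 6 ≤ Real.exp (c * L K) :=
        le_trans ((div_le_div_iff_of_pos_right (by norm_num)).mpr hcr3) hexp
      have h12 : (6:ℝ) / (c * r)^3 = ((c * r)^3 / 6)⁻¹ := by rw [inv_div]
      rw [h12]
      exact inv_anti₀ (by positivity) h11
    have e1 : 6 / (c * r)^3 = 48 * (Real.log K)^3 / (c^3 * (K:ℝ)^3) := by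
      rw [hr]
      field_simp
      ring
    have hKcube : (K:ℝ) ≤ (K:ℝ)^3 := by
      have := pow_le_pow_right₀ hK1 (by norm_num : 1 ≤ 3)
      simpa using this
    calc ((m K : ℝ) + 1) * q ^ (L K)
        ≤ Real.log K * (48 * (Real.log K)^3 / (c^3 * (K:ℝ)^3)) := by
          rw [← e1]
          exact mul_le_mul h1 hq6 (by positivity) hlogpos.le
      _ = 48 * (Real.log K)^4 / (c^3 * (K:ℝ)^3) := by ring
      _ ≤ 48 * (Real.log K)^4 / (c^3 * (K:ℝ)) := by
          apply div_le_div_of_nonneg_left (by positivity) (by positivity)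
          exact mul_le_mul_of_nonneg_left hKcube (by positivity)
      _ = (48 / c^3) * (Real.log K ^ 4 / (1 * K + 0)) := by
          field_simp
          ring
  have hup : Tendsto (fun K : ℕ => (48 / c^3) * (Real.log K ^ 4 / (1 * K + 0)))
      atTop (nhds 0) := by
    have h0 : Tendsto (fun x : ℝ => Real.log x ^ 4 / (1 * x + 0)) atTop (nhds 0) :=
      Real.tendsto_pow_log_div_mul_add_atTop 1 0 4 one_ne_zero
    have := (h0.comp tendsto_natCast_atTop_atTop).const_mul (48 / c^3)
    simpa using this
  exact squeeze_zero' (Eventually.of_forall fun K => by positivity) hbound hup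

open MeasureTheory ProbabilityTheory Filter

-- measure of intersection of complements
lemma lili_aux_meas {Ω : Type*} [MeasurableSpace Ω] (μ : Measure Ω) [IsProbabilityMeasure μ]
    (A : ℕ → Set Ω) (hA : ∀ k, MeasurableSet (A k)) (p : ℝ)
    (hindep : iIndepSet A μ) (hprob : ∀ k, μ (A k) = ENNReal.ofReal p)
    (s : Finset ℕ) :
    μ (⋂ k ∈ s, (A k)ᶜ) = (1 - ENNReal.ofReal p) ^ s.card := by
  have h' : iIndep (fun i => MeasurableSpace.generateFrom {A i}) μ :=
    (ProbabilityTheory.iIndepSet_iff_iIndep A μ).1 hindep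
  have hms : ∀ i, i ∈ s → MeasurableSet[MeasurableSpace.generateFrom {A i}] (A i)ᶜ :=
    fun i _ => (MeasurableSpace.measurableSet_generateFrom (Set.mem_singleton _)).compl
  rw [h'.meas_biInter hms]
  have : ∀ k, μ (A k)ᶜ = 1 - ENNReal.ofReal p := fun k => by
    rw [prob_compl_eq_one_sub (hA k), hprob k]
  rw [Finset.prod_congr rfl (fun k _ => this k), Finset.prod_const]

lemma lili_nat_div_real (K n : ℕ) (hn : 0 < n) : (K : ℝ) / n - 1 ≤ ((K / n : ℕ) : ℝ) := by
  have h1 : K < (K / n + 1) * n := by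
    have e := Nat.div_add_mod K n
    have l := Nat.mod_lt K hn
    calc K = n * (K / n) + K % n := e.symm
      _ < n * (K / n) + n := Nat.add_lt_add_left l _
      _ = (K / n + 1) * n := by ring
  have h2 : (K : ℝ) < ((K / n : ℕ) + 1) * n := by exact_mod_cast h1
  have hn' : (0:ℝ) < n := by exact_mod_cast hn
  rw [div_sub_one (by positivity), div_le_iff₀ hn']
  linarith



open MeasureTheory ProbabilityTheory Filter in
/-- Theorem 8 (LILI extension), first part: if `p > 0` and the tolerance function `f`
satisfies `0 < f K < K` and `(K - f K) / ln K → 0`, then the probability of the LILI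
event with tolerance `f` tends to `1`. -/
theorem lili_tolerance_one {Ω : Type*} [MeasurableSpace Ω] (μ : Measure Ω)
    [IsProbabilityMeasure μ] (A : ℕ → Set Ω) (hA : ∀ k, MeasurableSet (A k))
    (p : ℝ) (hp0 : 0 < p) (hp1 : p ≤ 1)
    (hindep : iIndepSet A μ) (hprob : ∀ k, μ (A k) = ENNReal.ofReal p)
    (f : ℕ → ℝ) (hf : ∀ K : ℕ, 1 ≤ K → 0 < f K ∧ f K < K)
    (hf0 : Tendsto (fun K : ℕ => ((K : ℝ) - f K) / Real.log K) atTop (nhds 0)) :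
    Tendsto (fun K : ℕ =>
        μ (⋃ S ∈ {S : Finset ℕ | S ⊆ Finset.range K ∧ (S.card : ℝ) > (K : ℝ) - f K},
            ⋂ k ∈ S, A k)) atTop (nhds 1) := by
  classical
  set U : ℕ → Set Ω := fun K =>
    ⋃ S ∈ {S : Finset ℕ | S ⊆ Finset.range K ∧ (S.card : ℝ) > (K : ℝ) - f K},
      ⋂ k ∈ S, A k with hU
  set m : ℕ → ℕ := fun K => ⌊(K : ℝ) - f K⌋₊ with hm
  set L : ℕ → ℕ := fun K => K / (m K + 1) with hLdef
  set q : ℝ := 1 - p / 2 with hqdef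
  have hq0 : 0 < q := by rw [hqdef]; linarith
  have hq1 : q < 1 := by rw [hqdef]; linarith
  have h1pq : 1 - p ≤ q := by rw [hqdef]; linarith
  have h1p0 : (0:ℝ) ≤ 1 - p := by linarith
  have hUmeas : ∀ K, MeasurableSet (U K) := fun K =>
    MeasurableSet.biUnion (Set.to_countable _)
      (fun S _ => MeasurableSet.biInter (Set.to_countable _) fun k _ => hA k)
  -- eventual bound on the complement
  have hbound : ∀ᶠ K : ℕ in atTop,
      μ (U K)ᶜ ≤ ENNReal.ofReal (((m K : ℝ) + 1) * q ^ (L K)) := by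
    filter_upwards [eventually_ge_atTop 1] with K hK1
    obtain ⟨hf1, hf2⟩ := hf K hK1
    have hg0 : 0 < (K : ℝ) - f K := by linarith
    have hgm : (K : ℝ) - f K < m K + 1 := Nat.lt_floor_add_one _
    have hmlt : ((m K : ℝ)) < K := lt_of_le_of_lt (Nat.floor_le hg0.le) (by linarith)
    have hmK : m K + 1 ≤ K := by
      have : m K < K := by exact_mod_cast hmlt
      omega
    have hL1 : 1 ≤ L K := by
      rw [hLdef]
      exact (Nat.le_div_iff_mul_le (Nat.succ_pos _)).2 (by omega)
    have hKL : (m K + 1) * L K ≤ K := by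
      rw [hLdef, mul_comm]
      exact Nat.div_mul_le_self K (m K + 1)
    have hsub := lili_aux_subset A K (m K) (L K) ((K : ℝ) - f K) hgm hKL hL1
    have hcard : ∀ i : ℕ, (Finset.Ico (i * L K) (i * L K + L K)).card = L K := by
      intro i; rw [Nat.card_Ico]; omega
    calc μ (U K)ᶜ
        ≤ μ (⋃ i ∈ Finset.range (m K + 1),
            ⋂ k ∈ Finset.Ico (i * L K) (i * L K + L K), (A k)ᶜ) := measure_mono hsub
      _ ≤ ∑ i ∈ Finset.range (m K + 1),
            μ (⋂ k ∈ Finset.Ico (i * L K) (i * L K + L K), (A k)ᶜ) :=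
          measure_biUnion_finset_le _ _
      _ = ∑ _i ∈ Finset.range (m K + 1), (1 - ENNReal.ofReal p) ^ (L K) := by
          refine Finset.sum_congr rfl fun i _ => ?_
          rw [lili_aux_meas μ A hA p hindep hprob, hcard i]
      _ = (m K + 1 : ℕ) * (1 - ENNReal.ofReal p) ^ (L K) := by
          rw [Finset.sum_const, Finset.card_range, nsmul_eq_mul]
      _ ≤ ENNReal.ofReal (((m K : ℝ) + 1) * q ^ (L K)) := by
          rw [ENNReal.ofReal_mul (by positivity), ENNReal.ofReal_pow hq0.le]
          have e1 : ((m K + 1 : ℕ) : ENNReal) = ENNReal.ofReal ((m K : ℝ) + 1) := by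
            rw [show ((m K : ℝ) + 1) = ((m K + 1 : ℕ) : ℝ) by push_cast; ring,
              ENNReal.ofReal_natCast]
          rw [← e1]
          refine mul_le_mul_right (pow_le_pow_left' ?_ _) _
          calc 1 - ENNReal.ofReal p = ENNReal.ofReal (1 - p) := by
                rw [ENNReal.ofReal_sub 1 hp0.le, ENNReal.ofReal_one]
            _ ≤ ENNReal.ofReal q := ENNReal.ofReal_le_ofReal h1pq
  -- real limit
  have hreal : Tendsto (fun K => ((m K : ℝ) + 1) * q ^ (L K)) atTop (nhds 0) := by
    refine lili_aux_tendsto q hq0 hq1 m L (fun K => (K : ℝ) - f K) ?_ hf0 ?_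
    · filter_upwards [eventually_ge_atTop 1] with K hK1
      obtain ⟨hf1, hf2⟩ := hf K hK1
      exact Nat.floor_le (by linarith)
    · filter_upwards [] with K
      have h := lili_nat_div_real K (m K + 1) (Nat.succ_pos _)
      have e : ((m K + 1 : ℕ) : ℝ) = (m K : ℝ) + 1 := by push_cast; ring
      rw [e] at h
      exact h
  have hcompl : Tendsto (fun K => μ (U K)ᶜ) atTop (nhds 0) := by
    have hup : Tendsto (fun K => ENNReal.ofReal (((m K : ℝ) + 1) * q ^ (L K)))
        atTop (nhds 0) := by
      have := ENNReal.tendsto_ofReal hreal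
      simpa using this
    exact tendsto_of_tendsto_of_tendsto_of_le_of_le' tendsto_const_nhds hup
      (Eventually.of_forall fun K => zero_le) hbound
  have heq : (fun K => μ (U K)) = fun K => 1 - μ (U K)ᶜ := by
    funext K
    rw [prob_compl_eq_one_sub (hUmeas K),
      ENNReal.sub_sub_cancel ENNReal.one_ne_top prob_le_one]
  show Tendsto (fun K => μ (U K)) atTop (nhds 1)
  rw [heq]
  have := ENNReal.Tendsto.sub (tendsto_const_nhds (x := (1 : ENNReal))) hcompl
    (Or.inl ENNReal.one_ne_top)
  simpa using this
end

section
/- Let (Ω, 𝓕, μ) be a probability space and let (A_k)_{k ∈ ℕ} be a sequence of measurable events that are mutually independent with μ(A_k) = ENNReal.ofReal p for every k, where 1/2 < p ≤ 1. Let f : ℕ → ℝ satisfy 0 < f(K) < K for all K ≥ 1 and K / ((K − f(K)) · 2^{K − f(K)}) → +∞ as K → ∞. Then μ( ⋃_{S ⊆ {0,…,K−1}, (|S| : ℝ) > K − f(K)} ⋂_{k ∈ S} A_k ) → 1 as K → ∞. -/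
open MeasureTheory ProbabilityTheory Filter

lemma aux_meas_inter_compl {Ω : Type*} [MeasurableSpace Ω] (μ : Measure Ω)
    [IsProbabilityMeasure μ] (A : ℕ → Set Ω) (hA : ∀ k, MeasurableSet (A k))
    (p : ℝ) (hp : 0 ≤ p) (hp1 : p ≤ 1)
    (hindep : iIndepSet A μ) (hprob : ∀ k, μ (A k) = ENNReal.ofReal p) :
    ∀ (T S : Finset ℕ), Disjoint S T →
      μ ((⋂ k ∈ S, A k) ∩ ⋂ k ∈ T, (A k)ᶜ)
        = ENNReal.ofReal p ^ S.card * ENNReal.ofReal (1 - p) ^ T.card := by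
  intro T
  induction T using Finset.induction with
  | empty =>
      intro S _
      simp only [Finset.notMem_empty, Set.iInter_of_empty, Set.iInter_univ, Set.inter_univ,
        Finset.card_empty, pow_zero, mul_one]
      rw [hindep.meas_biInter, Finset.prod_congr rfl (fun i _ => hprob i), Finset.prod_const]
  | @insert a t hat ih =>
      intro S hdisj
      have haS : a ∉ S := fun h => (Finset.disjoint_left.mp hdisj h) (Finset.mem_insert_self a t)
      have hSt : Disjoint S t := hdisj.mono_right (Finset.subset_insert a t)
      have hSat : Disjoint (insert a S) t := by
        rw [Finset.disjoint_left]
        intro k hk hkt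
        rcases Finset.mem_insert.mp hk with rfl | hkS
        · exact hat hkt
        · exact Finset.disjoint_left.mp hSt hkS hkt
      set X : Set Ω := (⋂ k ∈ S, A k) ∩ ⋂ k ∈ t, (A k)ᶜ with hX
      have hXmeas : MeasurableSet X :=
        (MeasurableSet.biInter (Set.to_countable _) (fun k _ => hA k)).inter
          (MeasurableSet.biInter (Set.to_countable _) (fun k _ => (hA k).compl))
      have hset : (⋂ k ∈ S, A k) ∩ ⋂ k ∈ insert a t, (A k)ᶜ = X \ A a := by
        rw [Finset.set_biInter_insert, Set.diff_eq, hX]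
        ext ω; simp; tauto
      have hXA : X ∩ A a = (⋂ k ∈ insert a S, A k) ∩ ⋂ k ∈ t, (A k)ᶜ := by
        rw [Finset.set_biInter_insert, hX]
        ext ω; simp; tauto
      have h1 : μ X = ENNReal.ofReal p ^ S.card * ENNReal.ofReal (1 - p) ^ t.card := ih S hSt
      have h2 : μ (X ∩ A a)
          = ENNReal.ofReal p ^ (S.card + 1) * ENNReal.ofReal (1 - p) ^ t.card := by
        rw [hXA, ih (insert a S) hSat, Finset.card_insert_of_notMem haS]
      have hdiff : μ (X \ A a) = μ X - μ (X ∩ A a) := by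
        rw [eq_comm, ENNReal.sub_eq_of_eq_add (measure_ne_top μ _)]
        rw [add_comm]
        exact (measure_inter_add_diff X (hA a)).symm
      rw [hset, hdiff, h1, h2, Finset.card_insert_of_notMem hat]
      have hQ : ENNReal.ofReal (1 - p) = 1 - ENNReal.ofReal p := by
        rw [← ENNReal.ofReal_one, ← ENNReal.ofReal_sub _ hp]
      have hfin : ENNReal.ofReal p ^ S.card * ENNReal.ofReal (1 - p) ^ t.card ≠ ⊤ := by
        exact ENNReal.mul_ne_top (ENNReal.pow_ne_top ENNReal.ofReal_ne_top)
          (ENNReal.pow_ne_top ENNReal.ofReal_ne_top)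
      rw [pow_succ, pow_succ]
      ring_nf
      rw [hQ]
      calc ENNReal.ofReal p ^ S.card * (1 - ENNReal.ofReal p) ^ t.card -
            ENNReal.ofReal p * ENNReal.ofReal p ^ S.card * (1 - ENNReal.ofReal p) ^ t.card
          = (1 - ENNReal.ofReal p) *
              (ENNReal.ofReal p ^ S.card * (1 - ENNReal.ofReal p) ^ t.card) := by
            rw [ENNReal.sub_mul (fun _ _ => by rw [hQ] at hfin; exact hfin), one_mul, mul_assoc]
        _ = ENNReal.ofReal p ^ S.card * (1 - ENNReal.ofReal p) *
              (1 - ENNReal.ofReal p) ^ t.card := by ring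



lemma aux_real_tendsto (p : ℝ) (hp0 : 1 / 2 < p) (hp1 : p ≤ 1) (f : ℕ → ℝ)
    (hf : ∀ K : ℕ, 1 ≤ K → 0 < f K ∧ f K < K)
    (hf0 : Tendsto (fun K : ℕ =>
        (K : ℝ) / (((K : ℝ) - f K) * (2 : ℝ) ^ ((K : ℝ) - f K))) atTop atTop) :
    Tendsto (fun K : ℕ =>
      ((K.choose (K - ⌊(K : ℝ) - f K⌋₊) : ℕ) : ℝ) * (1 - p) ^ (K - ⌊(K : ℝ) - f K⌋₊))
      atTop (nhds 0) := by
  set q : ℝ := 1 - p with hq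
  have hq0 : 0 ≤ q := by simp [hq]; linarith
  have hqh : q ≤ 1 / 2 := by simp [hq]; linarith
  set m : ℕ → ℕ := fun K => ⌊(K : ℝ) - f K⌋₊ with hm
  -- eventually, m K ≤ log K / log 2
  have hlog2 : (0:ℝ) < Real.log 2 := Real.log_pos (by norm_num)
  have hmle : ∀ᶠ K : ℕ in atTop, (m K : ℝ) ≤ Real.log K / Real.log 2 := by
    have h1 : ∀ᶠ K : ℕ in atTop,
        1 ≤ (K : ℝ) / (((K : ℝ) - f K) * (2 : ℝ) ^ ((K : ℝ) - f K)) :=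
      hf0.eventually_ge_atTop 1
    filter_upwards [h1, eventually_ge_atTop 2] with K hK1 hK2
    have hK1' : 1 ≤ K := le_trans (by norm_num) hK2
    obtain ⟨hfpos, hflt⟩ := hf K hK1'
    set g : ℝ := (K : ℝ) - f K with hg
    have hg0 : 0 < g := by simp [hg]; exact hflt
    have hK2' : (2:ℝ) ≤ (K:ℝ) := by exact_mod_cast hK2
    have hlogK : Real.log 2 ≤ Real.log K := Real.log_le_log (by norm_num) hK2'
    have hgle : g * (2:ℝ) ^ g ≤ K := by
      have hpow : (0:ℝ) < (2:ℝ) ^ g := Real.rpow_pos_of_pos (by norm_num) g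
      have hden : (0:ℝ) < g * (2:ℝ) ^ g := mul_pos hg0 hpow
      rw [le_div_iff₀ hden, one_mul] at hK1
      exact hK1
    have hmg : (m K : ℝ) ≤ g := Nat.floor_le hg0.le
    -- show g ≤ log K / log 2 when g ≥ 1; else m K ≤ g < 1 and log K / log 2 ≥ 1
    rcases le_or_gt 1 g with hg1 | hg1
    · have h2g : (2:ℝ) ^ g ≤ K := by
        calc (2:ℝ) ^ g ≤ g * (2:ℝ) ^ g := by
              nlinarith [Real.rpow_pos_of_pos (show (0:ℝ) < 2 by norm_num) g]
          _ ≤ K := hgle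
      have : g * Real.log 2 ≤ Real.log K := by
        calc g * Real.log 2 = Real.log ((2:ℝ) ^ g) := (Real.log_rpow (by norm_num) g).symm
          _ ≤ Real.log K := Real.log_le_log (Real.rpow_pos_of_pos (by norm_num) g) h2g
      calc (m K : ℝ) ≤ g := hmg
        _ ≤ Real.log K / Real.log 2 := by rw [le_div_iff₀ hlog2]; exact this
    · calc (m K : ℝ) ≤ g := hmg
        _ ≤ 1 := hg1.le
        _ ≤ Real.log K / Real.log 2 := by rw [le_div_iff₀ hlog2]; linarith
  -- the exponent bound tends to -∞
  have hu : Tendsto (fun K : ℕ =>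
      (Real.log K / Real.log 2) * (2 * Real.log K) - K * Real.log 2) atTop atBot := by
    have hv : Tendsto (fun K : ℕ => Real.log K ^ 2 / K) atTop (nhds 0) := by
      have := Real.tendsto_pow_log_div_mul_add_atTop 1 0 2 one_ne_zero
      have := this.comp tendsto_natCast_atTop_atTop (α := ℕ)
      simpa [Function.comp_def] using this
    have hcoef : Tendsto (fun K : ℕ => (2 / Real.log 2) * (Real.log K ^ 2 / K) - Real.log 2)
        atTop (nhds (-Real.log 2)) := by
      have := (hv.const_mul (2 / Real.log 2)).sub_const (Real.log 2)
      simpa using this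
    have hmain : Tendsto (fun K : ℕ =>
        ((2 / Real.log 2) * (Real.log K ^ 2 / K) - Real.log 2) * K) atTop atBot :=
      Tendsto.neg_mul_atTop (by linarith) hcoef tendsto_natCast_atTop_atTop
    apply hmain.congr'
    filter_upwards [eventually_ge_atTop 1] with K hK1
    have hK0 : (0:ℝ) < K := by exact_mod_cast hK1
    field_simp
  have hexp : Tendsto (fun K : ℕ =>
      Real.exp ((Real.log K / Real.log 2) * (2 * Real.log K) - K * Real.log 2))
      atTop (nhds 0) := Real.tendsto_exp_atBot.comp hu
  apply squeeze_zero' ?_ ?_ hexp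
  · filter_upwards with K; positivity
  · filter_upwards [hmle, eventually_ge_atTop 2] with K hmK hK2
    have hK1 : 1 ≤ K := le_trans (by norm_num) hK2
    have hK0 : (0:ℝ) < K := by positivity
    have hK2' : (2:ℝ) ≤ (K:ℝ) := by exact_mod_cast hK2
    have hlogK : Real.log 2 ≤ Real.log K := Real.log_le_log (by norm_num) hK2'
    have hmK' : m K ≤ K := by
      have : m K ≤ ⌊(K:ℝ)⌋₊ := Nat.floor_mono (sub_le_self _ (hf K hK1).1.le)
      simpa using this
    have hcast : ((K - m K : ℕ) : ℝ) = (K:ℝ) - m K := by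
      push_cast [hmK']; ring
    have e1 : (K:ℝ) ^ m K = Real.exp ((m K : ℝ) * Real.log K) := by
      conv_lhs => rw [← Real.exp_log hK0]
      rw [← Real.exp_nat_mul]
    have e2 : (1 / 2 : ℝ) ^ (K - m K)
        = Real.exp (((K - m K : ℕ) : ℝ) * (-Real.log 2)) := by
      have h12 : (1 / 2 : ℝ) = Real.exp (-Real.log 2) := by
        rw [← Real.log_inv, Real.exp_log (by norm_num)]; norm_num
      rw [h12, ← Real.exp_nat_mul]
    calc ((K.choose (K - m K) : ℕ) : ℝ) * q ^ (K - m K)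
        ≤ (K:ℝ) ^ m K * (1 / 2 : ℝ) ^ (K - m K) := by
          apply mul_le_mul _ (pow_le_pow_left₀ hq0 hqh _) (by positivity) (by positivity)
          have h1 : K.choose (K - m K) = K.choose (m K) := Nat.choose_symm hmK'
          have h2 : K.choose (m K) ≤ K ^ m K := Nat.choose_le_pow _ _
          exact_mod_cast h1 ▸ h2
      _ = Real.exp ((m K : ℝ) * Real.log K + ((K - m K : ℕ) : ℝ) * (-Real.log 2)) := by
          rw [e1, e2, ← Real.exp_add]
      _ ≤ Real.exp ((Real.log K / Real.log 2) * (2 * Real.log K) - K * Real.log 2) := by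
          apply Real.exp_le_exp.mpr
          rw [hcast]
          have hlognn : 0 ≤ Real.log K := le_trans hlog2.le hlogK
          have key : (m K : ℝ) * (Real.log K + Real.log 2)
              ≤ (Real.log K / Real.log 2) * (2 * Real.log K) := by
            calc (m K : ℝ) * (Real.log K + Real.log 2)
                ≤ (Real.log K / Real.log 2) * (Real.log K + Real.log 2) :=
                  mul_le_mul_of_nonneg_right hmK (by linarith)
              _ ≤ (Real.log K / Real.log 2) * (2 * Real.log K) :=
                  mul_le_mul_of_nonneg_left (by linarith) (by positivity)
          nlinarith [key]




open MeasureTheory ProbabilityTheory Filter in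
/-- Theorem 8 (LILI extension), second part: if `p > 1/2` and the tolerance function `f`
satisfies `0 < f K < K` and `K / ((K - f K) · 2^(K - f K)) → ∞`, then the probability
of the LILI event with tolerance `f` tends to `1`. -/
theorem lili_tolerance_one_of_half_lt {Ω : Type*} [MeasurableSpace Ω] (μ : Measure Ω)
    [IsProbabilityMeasure μ] (A : ℕ → Set Ω) (hA : ∀ k, MeasurableSet (A k))
    (p : ℝ) (hp0 : 1 / 2 < p) (hp1 : p ≤ 1)
    (hindep : iIndepSet A μ) (hprob : ∀ k, μ (A k) = ENNReal.ofReal p)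
    (f : ℕ → ℝ) (hf : ∀ K : ℕ, 1 ≤ K → 0 < f K ∧ f K < K)
    (hf0 : Tendsto (fun K : ℕ =>
        (K : ℝ) / (((K : ℝ) - f K) * (2 : ℝ) ^ ((K : ℝ) - f K))) atTop atTop) :
    Tendsto (fun K : ℕ =>
        μ (⋃ S ∈ {S : Finset ℕ | S ⊆ Finset.range K ∧ (S.card : ℝ) > (K : ℝ) - f K},
            ⋂ k ∈ S, A k)) atTop (nhds 1) := by
  classical
  set target : ℕ → Set Ω := fun K =>
    ⋃ S ∈ {S : Finset ℕ | S ⊆ Finset.range K ∧ (S.card : ℝ) > (K : ℝ) - f K},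
      ⋂ k ∈ S, A k with htarget
  have hmeas : ∀ K, MeasurableSet (target K) := fun K =>
    MeasurableSet.biUnion (Set.to_countable _)
      (fun S _ => MeasurableSet.biInter (Set.to_countable _) fun k _ => hA k)
  set m : ℕ → ℕ := fun K => ⌊(K : ℝ) - f K⌋₊ with hm
  -- complement inclusion
  have hincl : ∀ K : ℕ, 1 ≤ K → (target K)ᶜ ⊆
      ⋃ T ∈ ((Finset.range K).powersetCard (K - m K) : Finset (Finset ℕ)),
        ⋂ k ∈ T, (A k)ᶜ := by
    intro K hK1 ω hω
    set S : Finset ℕ := (Finset.range K).filter (fun k => ω ∈ A k) with hS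
    have hScard : (S.card : ℝ) ≤ (K : ℝ) - f K := by
      by_contra h
      push_neg at h
      apply hω
      refine Set.mem_biUnion (show S ∈ _ from ⟨Finset.filter_subset _ _, h⟩) ?_
      exact Set.mem_biInter fun k hk => (Finset.mem_filter.mp hk).2
    have hSm : S.card ≤ m K := Nat.le_floor hScard
    have hsdiff : K - m K ≤ (Finset.range K \ S).card := by
      rw [Finset.card_sdiff_of_subset (Finset.filter_subset _ _), Finset.card_range]
      exact Nat.sub_le_sub_left hSm K
    obtain ⟨T, hTsub, hTcard⟩ := Finset.exists_subset_card_eq hsdiff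
    refine Set.mem_biUnion (show T ∈ _ from Finset.mem_powersetCard.mpr
      ⟨hTsub.trans (Finset.sdiff_subset), hTcard⟩) ?_
    refine Set.mem_biInter fun k hk => ?_
    have hk' := hTsub hk
    rw [Finset.mem_sdiff] at hk'
    intro hωk
    exact hk'.2 (Finset.mem_filter.mpr ⟨hk'.1, hωk⟩)
  -- measure bound on complement
  have hcompl : ∀ K : ℕ, 1 ≤ K → μ ((target K)ᶜ) ≤
      (K.choose (K - m K) : ENNReal) * ENNReal.ofReal (1 - p) ^ (K - m K) := by
    intro K hK1
    calc μ ((target K)ᶜ)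
        ≤ μ (⋃ T ∈ ((Finset.range K).powersetCard (K - m K) : Finset (Finset ℕ)),
            ⋂ k ∈ T, (A k)ᶜ) := measure_mono (hincl K hK1)
      _ ≤ ∑ T ∈ (Finset.range K).powersetCard (K - m K), μ (⋂ k ∈ T, (A k)ᶜ) :=
          measure_biUnion_finset_le _ _
      _ = ∑ T ∈ (Finset.range K).powersetCard (K - m K),
            ENNReal.ofReal (1 - p) ^ (K - m K) := by
          apply Finset.sum_congr rfl
          intro T hT
          have hTc := (Finset.mem_powersetCard.mp hT).2
          have := aux_meas_inter_compl μ A hA p (by linarith) hp1 hindep hprob T ∅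
            (Finset.disjoint_empty_left T)
          simpa [hTc] using this
      _ = (K.choose (K - m K) : ENNReal) * ENNReal.ofReal (1 - p) ^ (K - m K) := by
          rw [Finset.sum_const, Finset.card_powersetCard, Finset.card_range, nsmul_eq_mul]
  -- complement measure tends to 0
  have hc0 : Tendsto (fun K => μ ((target K)ᶜ)) atTop (nhds 0) := by
    have hb : Tendsto (fun K : ℕ => ENNReal.ofReal
        (((K.choose (K - m K) : ℕ) : ℝ) * (1 - p) ^ (K - m K))) atTop (nhds 0) := by
      rw [show (0 : ENNReal) = ENNReal.ofReal 0 by simp]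
      exact ENNReal.tendsto_ofReal (aux_real_tendsto p hp0 hp1 f hf hf0)
    apply tendsto_of_tendsto_of_tendsto_of_le_of_le' tendsto_const_nhds hb
    · filter_upwards with K; exact zero_le
    · filter_upwards [eventually_ge_atTop 1] with K hK1
      refine (hcompl K hK1).trans (le_of_eq ?_)
      rw [ENNReal.ofReal_mul (by positivity), ENNReal.ofReal_natCast,
        ENNReal.ofReal_pow (by linarith)]
  -- conclude
  have heq : ∀ K : ℕ, μ (target K) = 1 - μ ((target K)ᶜ) := by
    intro K
    have := measure_compl (hmeas K).compl (measure_ne_top μ _)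
    rw [compl_compl, measure_univ] at this
    exact this
  have hfinal : Tendsto (fun K => μ (target K)) atTop (nhds 1) := by
    simp only [heq]
    have := ENNReal.Tendsto.sub (tendsto_const_nhds (x := (1:ENNReal)) (f := atTop)) hc0
      (Or.inl ENNReal.one_ne_top)
    simpa using this
  exact hfinal
end
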